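/- arXiv:1810.05561 — 9 statements merged into one kernel-verified Lean document; each statement's English description precedes it below -/
import Mathlib

section
/- Let (Ω, 𝔉, P) be a probability space, let X be a real-valued random variable, and let p > 1 with Hölder conjugate p' = p/(p-1). If 0 < (E[|X|^p])^{1/p} < ∞, then the supremum, over all probability measures Q on (Ω, 𝔉) that are absolutely continuous with respect to P, of E_P[(dQ/dP)^{1/p'} · |X|] equals (E[|X|^p])^{1/p}, and the supremum is attained. -/
/-!
Hölder's inequality with the conjugate pair `(p', p)` applied to `(dQ/dP)^{1/p'}` and `|X|`
gives the upper bound, since `‖(dQ/dP)^{1/p'}‖_{p'} = Q(Ω)^{1/p'} = 1`. Equality in Hölder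
holds when `dQ/dP` is proportional to `|X|^p`, so the normalized density `|X|^p / E|X|^p`
attains the bound.
-/

open MeasureTheory

namespace Real

lemma rpow_div_rpow_mul_self_of_holderConjugate {p q : ℝ} (hpq : p.HolderConjugate q)
    {a c : ℝ} (ha : 0 ≤ a) (hc : 0 ≤ c) :
    (a ^ p / c) ^ (1 / q) * a = a ^ p / c ^ (1 / q) := by
  have hexp : p * (1 / q) + 1 = p := by rw [mul_one_div, hpq.div_conj_eq_sub_one, sub_add_cancel]
  rw [div_rpow (rpow_nonneg ha _) hc, ← rpow_mul ha, div_mul_eq_mul_div,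
    ← rpow_add_one' ha (by rw [hexp]; exact hpq.ne_zero), hexp]

end Real

namespace MeasureTheory

variable {Ω : Type*} [MeasurableSpace Ω] {P : Measure Ω}

lemma memLp_ofReal_of_integrable_abs_rpow {p : ℝ} (hp : 0 < p) {f : Ω → ℝ}
    (hf : AEStronglyMeasurable f P) (hint : Integrable (fun ω => |f ω| ^ p) P) :
    MemLp f (ENNReal.ofReal p) P := by
  rw [← integrable_norm_rpow_iff hf (by simpa using hp) ENNReal.ofReal_ne_top,
    ENNReal.toReal_ofReal hp.le]
  simpa only [Real.norm_eq_abs] using hint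

lemma isProbabilityMeasure_withDensity_ofReal_div_integral {g : Ω → ℝ} (hg : 0 ≤ᵐ[P] g)
    (hgi : Integrable g P) (hpos : 0 < ∫ ω, g ω ∂P) :
    IsProbabilityMeasure (P.withDensity fun ω => ENNReal.ofReal (g ω / ∫ ω, g ω ∂P)) := by
  constructor
  rw [withDensity_apply _ MeasurableSet.univ, setLIntegral_univ,
    ← ofReal_integral_eq_lintegral_ofReal (hgi.div_const _)
      (by filter_upwards [hg] with ω hω using div_nonneg hω hpos.le),
    integral_div, div_self hpos.ne', ENNReal.ofReal_one]

lemma integral_rnDeriv_rpow_mul_abs_le {p q : ℝ} (hpq : p.HolderConjugate q) [SigmaFinite P]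
    {Q : Measure Ω} [IsProbabilityMeasure Q] (hQP : Q ≪ P) {X : Ω → ℝ}
    (hX : AEStronglyMeasurable X P) (hXp : Integrable (fun ω => |X ω| ^ p) P) :
    ∫ ω, (Q.rnDeriv P ω).toReal ^ (1 / q) * |X ω| ∂P ≤ (∫ ω, |X ω| ^ p ∂P) ^ (1 / p) := by
  set d : Ω → ℝ := fun ω => (Q.rnDeriv P ω).toReal
  have hd_nonneg (ω : Ω) : 0 ≤ d ω := ENNReal.toReal_nonneg
  have hd_root (ω : Ω) : (d ω ^ (1 / q)) ^ q = d ω := by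
    rw [← Real.rpow_mul (hd_nonneg ω), one_div_mul_cancel hpq.symm.ne_zero, Real.rpow_one]
  have hd_int : ∫ ω, d ω ∂P = 1 := by
    simp [d, Measure.integral_toReal_rnDeriv hQP]
  have hd_memLp : MemLp (fun ω => d ω ^ (1 / q)) (ENNReal.ofReal q) P := by
    refine memLp_ofReal_of_integrable_abs_rpow hpq.symm.pos
      ((Q.measurable_rnDeriv P).ennreal_toReal.pow_const _).aestronglyMeasurable ?_
    simpa only [abs_of_nonneg (Real.rpow_nonneg (hd_nonneg _) _), hd_root]
      using Measure.integrable_toReal_rnDeriv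
  have hX_memLp : MemLp (fun ω => |X ω|) (ENNReal.ofReal p) P :=
    (memLp_ofReal_of_integrable_abs_rpow hpq.pos hX hXp).abs
  have hHolder := integral_mul_le_Lp_mul_Lq_of_nonneg hpq.symm
    (Filter.Eventually.of_forall fun ω => Real.rpow_nonneg (hd_nonneg ω) _)
    (Filter.Eventually.of_forall fun ω => abs_nonneg (X ω)) hd_memLp hX_memLp
  simpa only [hd_root, hd_int, Real.one_rpow, one_mul] using hHolder

lemma integral_rnDeriv_withDensity_rpow_mul_abs [SigmaFinite P] {p q : ℝ}
    (hpq : p.HolderConjugate q) {X : Ω → ℝ} (hX : AEMeasurable X P)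
    (hpos : 0 < ∫ ω, |X ω| ^ p ∂P) :
    ∫ ω, ((P.withDensity fun ω => ENNReal.ofReal (|X ω| ^ p / ∫ ω, |X ω| ^ p ∂P)).rnDeriv P
        ω).toReal ^ (1 / q) * |X ω| ∂P = (∫ ω, |X ω| ^ p ∂P) ^ (1 / p) := by
  set c := ∫ ω, |X ω| ^ p ∂P
  have hdensity := Measure.rnDeriv_withDensity₀ P
    ((hX.abs.pow_const p).div_const c).ennreal_ofReal
  calc _ = ∫ ω, |X ω| ^ p / c ^ (1 / q) ∂P := by
        refine integral_congr_ae ?_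
        filter_upwards [hdensity] with ω hω
        rw [hω, ENNReal.toReal_ofReal (by positivity),
          Real.rpow_div_rpow_mul_self_of_holderConjugate hpq (abs_nonneg _) hpos.le]
    _ = c ^ (1 / p) := by
        rw [integral_div, one_div p, ← hpq.symm.one_sub_inv, ← one_div, Real.rpow_sub hpos,
          Real.rpow_one]

end MeasureTheory

/-- Variational formula for the `p`-norm (Theorem 2 of the paper): for a real random
variable `X` on a probability space `(Ω, P)` and `p > 1` with Hölder conjugate
`p' = p/(p−1)`, if `0 < (E[|X|^p])^{1/p} < ∞` then the supremum, over all probability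
measures `Q ≪ P`, of `E_P[(dQ/dP)^{1/p'}·|X|]` equals `(E[|X|^p])^{1/p}`, and it is
attained. -/
theorem stmt_0 {Ω : Type*} [MeasurableSpace Ω] (P : Measure Ω) [IsProbabilityMeasure P]
    (X : Ω → ℝ) (hX : Measurable X) (p : ℝ) (hp : 1 < p)
    (hpos : 0 < ∫ ω, |X ω| ^ p ∂P)
    (hfin : Integrable (fun ω => |X ω| ^ p) P) :
    IsGreatest
      {r : ℝ | ∃ Q : Measure Ω, IsProbabilityMeasure Q ∧ Q ≪ P ∧
        r = ∫ ω, (Q.rnDeriv P ω).toReal ^ (1 / (p / (p - 1))) * |X ω| ∂P}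
      ((∫ ω, |X ω| ^ p ∂P) ^ (1 / p)) := by
  have hpq := Real.HolderConjugate.conjExponent hp
  constructor
  · exact ⟨_, isProbabilityMeasure_withDensity_ofReal_div_integral
      (Filter.Eventually.of_forall fun ω => by positivity) hfin hpos,
      withDensity_absolutelyContinuous _ _,
      (integral_rnDeriv_withDensity_rpow_mul_abs hpq hX.aemeasurable hpos).symm⟩
  · rintro r ⟨Q, hQ, hQP, rfl⟩
    exact integral_rnDeriv_rpow_mul_abs_le hpq hQP hX.aestronglyMeasurable hfin
end

section
/- Let 𝒳 be a nonempty finite set, P a probability mass function on 𝒳 with P(x) > 0 for all x, and let ℓ : 𝒳 → ℝ≥0 satisfy Kraft's inequality Σ_{x∈𝒳} 2^{−ℓ(x)} ≤ 1. Write L = ℓ(X) for X distributed according to P, and suppose E[L] > 0. Then E[L] + E[L²]/(2E[L]) − 1/2 ≥ (3/2)·H(P) − 1/2, where H(P) = Σ_{x∈𝒳} P(x) log₂(1/P(x)) is the Shannon entropy in bits. -/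
open Real Finset

/-- Lower bound on the average age: for any pmf `P` on a nonempty finite alphabet and any
real-valued length function `ℓ ≥ 0` satisfying Kraft's inequality, with `E[L] > 0`,
`E[L] + E[L²]/(2E[L]) − 1/2 ≥ (3/2)·H(P) − 1/2`, where `H(P)` is the Shannon entropy
in bits. -/
theorem stmt_4 {𝒳 : Type*} [Fintype 𝒳] [Nonempty 𝒳]
    (P : 𝒳 → ℝ) (hP : ∀ x, 0 < P x) (hPsum : ∑ x, P x = 1)
    (ℓ : 𝒳 → ℝ) (hℓ : ∀ x, 0 ≤ ℓ x)
    (hKraft : ∑ x, (2 : ℝ) ^ (-ℓ x) ≤ 1)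
    (hEL : 0 < ∑ x, P x * ℓ x) :
    (∑ x, P x * ℓ x) + (∑ x, P x * ℓ x ^ 2) / (2 * ∑ x, P x * ℓ x) - 1 / 2 ≥
      3 / 2 * (∑ x, P x * Real.logb 2 (1 / P x)) - 1 / 2 := by
  set EL := ∑ x, P x * ℓ x with hELdef
  set EL2 := ∑ x, P x * ℓ x ^ 2 with hEL2def
  set H := ∑ x, P x * Real.logb 2 (1 / P x) with hHdef
  -- Cauchy-Schwarz: EL^2 ≤ EL2
  have hCS : EL ^ 2 ≤ EL2 := by
    have := Finset.sum_sq_le_sum_mul_sum_of_sq_eq_mul (univ : Finset 𝒳)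
      (r := fun x => P x * ℓ x) (f := P) (g := fun x => P x * ℓ x ^ 2)
      (fun i _ => (hP i).le) (fun i _ => mul_nonneg (hP i).le (sq_nonneg _))
      (fun i _ => by ring)
    simpa [hPsum] using this
  -- Gibbs: H ≤ EL
  have hGibbs : H ≤ EL := by
    have h2 : (0:ℝ) < Real.log 2 := Real.log_pos (by norm_num)
    have key : ∀ x, P x * Real.logb 2 (1 / P x) - P x * ℓ x
        ≤ ((2:ℝ) ^ (-ℓ x) - P x) / Real.log 2 := by
      intro x
      have hpx := hP x
      have hq : (0:ℝ) < (2:ℝ) ^ (-ℓ x) := Real.rpow_pos_of_pos (by norm_num) _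
      have hlog : Real.log ((2:ℝ) ^ (-ℓ x) / P x) ≤ (2:ℝ) ^ (-ℓ x) / P x - 1 :=
        Real.log_le_sub_one_of_pos (div_pos hq hpx)
      have hexpand : Real.log ((2:ℝ) ^ (-ℓ x) / P x)
          = (-ℓ x) * Real.log 2 - Real.log (P x) := by
        rw [Real.log_div (ne_of_gt hq) (ne_of_gt hpx), Real.log_rpow (by norm_num)]
      have h1 : P x * ((-ℓ x) * Real.log 2 - Real.log (P x)) ≤ (2:ℝ) ^ (-ℓ x) - P x := by
        have := mul_le_mul_of_nonneg_left hlog hpx.le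
        rw [hexpand] at this
        calc P x * ((-ℓ x) * Real.log 2 - Real.log (P x))
            ≤ P x * ((2:ℝ) ^ (-ℓ x) / P x - 1) := this
          _ = (2:ℝ) ^ (-ℓ x) - P x := by field_simp
      have hlogb : Real.logb 2 (1 / P x) = - Real.log (P x) / Real.log 2 := by
        rw [Real.logb, Real.log_div one_ne_zero (ne_of_gt hpx), Real.log_one]
        ring
      rw [hlogb]
      have e : P x * (-Real.log (P x) / Real.log 2) - P x * ℓ x
          = (P x * (-ℓ x * Real.log 2 - Real.log (P x))) / Real.log 2 := by
        field_simp; ring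
      rw [e]
      gcongr
    have hsub : H - EL ≤ 0 := by
      calc H - EL = ∑ x, (P x * Real.logb 2 (1 / P x) - P x * ℓ x) := by
            rw [hHdef, hELdef, ← Finset.sum_sub_distrib]
        _ ≤ ∑ x, ((2:ℝ) ^ (-ℓ x) - P x) / Real.log 2 :=
            Finset.sum_le_sum (fun x _ => key x)
        _ = ((∑ x, (2:ℝ) ^ (-ℓ x)) - 1) / Real.log 2 := by
            rw [← Finset.sum_div, Finset.sum_sub_distrib, hPsum]
        _ ≤ 0 := div_nonpos_of_nonpos_of_nonneg (by linarith) h2.le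
    linarith
  -- combine
  have hhalf : EL / 2 ≤ EL2 / (2 * EL) := by
    rw [div_le_div_iff₀ (by norm_num) (by positivity)]
    nlinarith
  linarith
end

section
/- Let 𝒳 be a nonempty finite set and P a probability mass function on 𝒳 with P(x) > 0 for all x. Define the Shannon code lengths ℓ_S(x) = ⌈log₂(1/P(x))⌉ and let L_S = ℓ_S(X) for X ∼ P. Then log₂|𝒳| ≥ (1 − 1/(2 ln 2)) · E[L_S²]/E[L_S] − 1; equivalently, E[L_S²]/E[L_S] ≤ (log₂|𝒳| + 1) / (1 − 1/(2 ln 2)). Consequently the average age E[L_S] + E[L_S²]/(2E[L_S]) − 1/2 of the Shannon code for P is O(log |𝒳|). -/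
/-!
Write `A = E[L]`, `B = E[L²]` and `n = |𝒳|`. Shannon lengths satisfy `ℓ ln 2 ≤ ln(1/P) + ln 2`,
so `B ln 2 ≤ E[L ln(1/P)] + A ln 2`. Reweighting by `w = P ℓ / A` splits
`ln(1/P) = ln(ℓ/A) + ln(1/w)`, and Jensen's inequality for `ln` bounds the two `w`-averages by
`ln(B/A²)` and `ln n`. Since `A ≥ 1`, `ln(B/A²) ≤ ln(B/A) ≤ B/(2A)`, whence
`B ln 2 ≤ B/2 + A ln n + A ln 2`, which is the claim after dividing by `A ln 2`.
-/

open Real Finset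

lemma Real.log_le_half_self {r : ℝ} (hr : 0 < r) : log r ≤ r / 2 := by
  have h := log_le_sub_one_of_pos (half_pos hr)
  rw [log_div hr.ne' two_ne_zero] at h
  linarith [log_two_lt_d9]

lemma Real.sum_mul_log_le_log_sum_mul {ι : Type*} (s : Finset ι) {w p : ι → ℝ}
    (hw : ∀ i ∈ s, 0 ≤ w i) (hw1 : ∑ i ∈ s, w i = 1) (hp : ∀ i ∈ s, 0 < p i) :
    ∑ i ∈ s, w i * log (p i) ≤ log (∑ i ∈ s, w i * p i) := by
  simpa only [smul_eq_mul] using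
    strictConcaveOn_log_Ioi.concaveOn.le_map_sum hw hw1 fun i hi => Set.mem_Ioi.2 (hp i hi)

lemma Nat.one_le_ceil_logb_one_div {b p : ℝ} (hb : 1 < b) (hp0 : 0 < p) (hp1 : p < 1) :
    1 ≤ ⌈logb b (1 / p)⌉₊ :=
  Nat.one_le_iff_ne_zero.2 (Nat.ceil_pos.2 (logb_pos hb ((one_lt_div hp0).2 hp1))).ne'

lemma Nat.ceil_logb_one_div_lt {b p : ℝ} (hb : 1 < b) (hp0 : 0 < p) (hp1 : p ≤ 1) :
    (⌈logb b (1 / p)⌉₊ : ℝ) < logb b (1 / p) + 1 :=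
  Nat.ceil_lt_add_one (logb_nonneg hb ((one_le_div hp0).2 hp1))

section Weighted

variable {ι : Type*} [Fintype ι] {P ℓ : ι → ℝ}

lemma lt_one_of_sum_eq_one [Nontrivial ι] (hP : ∀ i, 0 < P i) (hPsum : ∑ i, P i = 1) (i : ι) :
    P i < 1 := by
  obtain ⟨j, hji⟩ := exists_ne i
  exact hPsum ▸ single_lt_sum hji (mem_univ i) (mem_univ j) (hP j) fun k _ _ => (hP k).le

lemma sum_mul_log_inv_le_log_card {w : ι → ℝ} (hw : ∀ i, 0 < w i) (hw1 : ∑ i, w i = 1) :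
    ∑ i, w i * log (w i)⁻¹ ≤ log (Fintype.card ι) := by
  have h := sum_mul_log_le_log_sum_mul univ (fun i _ => (hw i).le) hw1
    fun i _ => inv_pos.2 (hw i)
  simpa [mul_inv_cancel₀ (hw _).ne'] using h

lemma sum_mul_mul_log_inv_le (hP : ∀ i, 0 < P i) (hPsum : ∑ i, P i = 1) (hℓ : ∀ i, 0 < ℓ i) :
    ∑ i, P i * ℓ i * log (P i)⁻¹ ≤
      (∑ i, P i * ℓ i) * (log ((∑ i, P i * ℓ i ^ 2) / (∑ i, P i * ℓ i) ^ 2)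
        + log (Fintype.card ι)) := by
  set A := ∑ i, P i * ℓ i
  set B := ∑ i, P i * ℓ i ^ 2
  have hA : 0 < A :=
    sum_pos (fun i _ => mul_pos (hP i) (hℓ i)) (nonempty_of_sum_ne_zero (hPsum ▸ one_ne_zero))
  set w : ι → ℝ := fun i => P i * ℓ i / A
  have hw : ∀ i, 0 < w i := fun i => div_pos (mul_pos (hP i) (hℓ i)) hA
  have hw1 : ∑ i, w i = 1 := by rw [← sum_div, div_self hA.ne']
  have hAw : ∀ i, A * w i = P i * ℓ i := fun i => mul_div_cancel₀ _ hA.ne'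
  have hsplit : ∀ i, P i * ℓ i * log (P i)⁻¹ = A * (w i * log (ℓ i / A) + w i * log (w i)⁻¹) := by
    intro i
    have hinv : (P i)⁻¹ = ℓ i / A * (w i)⁻¹ := by
      rw [← div_eq_mul_inv, div_div, hAw, div_mul_cancel_right₀ (hℓ i).ne']
    rw [← mul_add, ← log_mul (div_pos (hℓ i) hA).ne' (inv_pos.2 (hw i)).ne', ← hinv, ← mul_assoc,
      hAw]
  have hlength : ∑ i, w i * log (ℓ i / A) ≤ log (B / A ^ 2) := by
    have h := sum_mul_log_le_log_sum_mul univ (fun i _ => (hw i).le) hw1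
      fun i _ => div_pos (hℓ i) hA
    convert h using 2
    rw [div_eq_iff (pow_ne_zero 2 hA.ne'), sum_mul]
    refine sum_congr rfl fun i _ => ?_
    field_simp
    linear_combination (-ℓ i) * hAw i
  calc ∑ i, P i * ℓ i * log (P i)⁻¹
      = A * (∑ i, w i * log (ℓ i / A) + ∑ i, w i * log (w i)⁻¹) := by
        simp only [hsplit, ← mul_sum, sum_add_distrib]
    _ ≤ A * (log (B / A ^ 2) + log (Fintype.card ι)) := by
        gcongr ?_ * ?_
        exact add_le_add hlength (sum_mul_log_inv_le_log_card hw hw1)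

lemma mul_sum_sq_div_sum_sub_one_le_logb_card (hP : ∀ i, 0 < P i) (hPsum : ∑ i, P i = 1)
    (hℓ : ∀ i, 1 ≤ ℓ i) (hℓP : ∀ i, ℓ i ≤ logb 2 (P i)⁻¹ + 1) :
    (1 - 1 / (2 * log 2)) * ((∑ i, P i * ℓ i ^ 2) / ∑ i, P i * ℓ i) - 1 ≤
      logb 2 (Fintype.card ι) := by
  set A := ∑ i, P i * ℓ i
  set B := ∑ i, P i * ℓ i ^ 2
  have hlog2 : 0 < log 2 := log_pos one_lt_two
  have hℓ0 : ∀ i, 0 < ℓ i := fun i => one_pos.trans_le (hℓ i)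
  have hA : 1 ≤ A := hPsum ▸ sum_le_sum fun i _ => le_mul_of_one_le_right (hP i).le (hℓ i)
  have hAB : A ≤ B := sum_le_sum fun i _ =>
    mul_le_mul_of_nonneg_left (le_self_pow₀ (hℓ i) two_ne_zero) (hP i).le
  have hB : 0 < B := by linarith
  have hlen : ∀ i, ℓ i * log 2 ≤ log (P i)⁻¹ + log 2 := fun i => by
    simpa only [add_mul, one_mul, logb, div_mul_cancel₀ _ hlog2.ne'] using
      mul_le_mul_of_nonneg_right (hℓP i) hlog2.le
  have hB_le : B * log 2 ≤ ∑ i, P i * ℓ i * log (P i)⁻¹ + A * log 2 := by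
    simp only [B, A, sum_mul, ← sum_add_distrib]
    gcongr with i
    have := mul_le_mul_of_nonneg_left (hlen i) (mul_pos (hP i) (hℓ0 i)).le
    linarith
  have hlog_ratio : log (B / A ^ 2) ≤ B / A / 2 := calc
    log (B / A ^ 2) ≤ log (B / A) :=
      log_le_log (by positivity) (div_le_div_of_nonneg_left hB.le (by positivity) (by nlinarith))
    _ ≤ B / A / 2 := log_le_half_self (by positivity)
  have hmain : B * log 2 ≤ B / 2 + A * log (Fintype.card ι) + A * log 2 := by
    have := mul_le_mul_of_nonneg_left hlog_ratio (zero_le_one.trans hA)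
    rw [show A * (B / A / 2) = B / 2 by field_simp] at this
    linarith [sum_mul_mul_log_inv_le hP hPsum hℓ0]
  rw [logb, le_div_iff₀ hlog2]
  calc ((1 - 1 / (2 * log 2)) * (B / A) - 1) * log 2
      = (B * log 2 - B / 2 - A * log 2) / A := by field_simp
    _ ≤ log (Fintype.card ι) := by rw [div_le_iff₀ (by positivity)]; linarith

end Weighted

theorem stmt_6_general {𝒳 : Type*} [Fintype 𝒳]
    (P : 𝒳 → ℝ) (hP : ∀ x, 0 < P x) (hPsum : ∑ x, P x = 1)
    (ℓS : 𝒳 → ℕ) (hℓS : ∀ x, ℓS x = Nat.ceil (Real.logb 2 (1 / P x))) :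
    (Real.logb 2 (Fintype.card 𝒳) ≥
      (1 - 1 / (2 * Real.log 2)) * ((∑ x, P x * (ℓS x : ℝ) ^ 2) / (∑ x, P x * (ℓS x : ℝ)))
        - 1) ∧
    ((∑ x, P x * (ℓS x : ℝ) ^ 2) / (∑ x, P x * (ℓS x : ℝ)) ≤
      (Real.logb 2 (Fintype.card 𝒳) + 1) / (1 - 1 / (2 * Real.log 2))) := by
  have hbound : (1 - 1 / (2 * log 2)) *
      ((∑ x, P x * (ℓS x : ℝ) ^ 2) / ∑ x, P x * (ℓS x : ℝ)) - 1 ≤ logb 2 (Fintype.card 𝒳) := by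
    rcases le_or_gt (Fintype.card 𝒳) 1 with hcard | hcard
    · -- all lengths vanish and the ratio is the junk value `0 / 0 = 0`
      have : Subsingleton 𝒳 := Fintype.card_le_one_iff_subsingleton.1 hcard
      have hℓ0 : ∀ x, ℓS x = 0 := fun x => by
        rw [hℓS x, (Fintype.sum_subsingleton P x).symm.trans hPsum]
        simp
      rcases Nat.le_one_iff_eq_zero_or_eq_one.1 hcard with h | h <;> simp [hℓ0, h]
    · have : Nontrivial 𝒳 := Fintype.one_lt_card_iff_nontrivial.1 hcard
      have hP1 := lt_one_of_sum_eq_one hP hPsum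
      refine mul_sum_sq_div_sum_sub_one_le_logb_card hP hPsum (fun x => ?_) (fun x => ?_)
      · exact_mod_cast hℓS x ▸ Nat.one_le_ceil_logb_one_div one_lt_two (hP x) (hP1 x)
      · rw [hℓS x, ← one_div]
        exact (Nat.ceil_logb_one_div_lt one_lt_two (hP x) (hP1 x).le).le
  have hc : 0 < 1 - 1 / (2 * log 2) := by
    rw [sub_pos, div_lt_one (by positivity)]
    linarith [log_two_gt_d9]
  exact ⟨hbound, (le_div_iff₀ hc).2 (by linarith)⟩

/-- The average age of a Shannon code for `P` is `O(log |𝒳|)`: with Shannon lengths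
`ℓ_S(x) = ⌈log₂(1/P(x))⌉` and `L_S = ℓ_S(X)`, `X ∼ P`, one has
`log₂|𝒳| ≥ (1 − 1/(2 ln 2))·E[L_S²]/E[L_S] − 1`; equivalently,
`E[L_S²]/E[L_S] ≤ (log₂|𝒳| + 1)/(1 − 1/(2 ln 2))`. -/
theorem stmt_6 {𝒳 : Type*} [Fintype 𝒳] [Nonempty 𝒳]
    (P : 𝒳 → ℝ) (hP : ∀ x, 0 < P x) (hPsum : ∑ x, P x = 1)
    (ℓS : 𝒳 → ℕ) (hℓS : ∀ x, ℓS x = Nat.ceil (Real.logb 2 (1 / P x))) :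
    (Real.logb 2 (Fintype.card 𝒳) ≥
      (1 - 1 / (2 * Real.log 2)) * ((∑ x, P x * (ℓS x : ℝ) ^ 2) / (∑ x, P x * (ℓS x : ℝ)))
        - 1) ∧
    ((∑ x, P x * (ℓS x : ℝ) ^ 2) / (∑ x, P x * (ℓS x : ℝ)) ≤
      (Real.logb 2 (Fintype.card 𝒳) + 1) / (1 - 1 / (2 * Real.log 2))) :=
  stmt_6_general P hP hPsum ℓS hℓS
end

section
/- Let 𝒳 be a finite set with |𝒳| ≥ 2 and P a probability mass function on 𝒳 with P(x) > 0 for all x. Let Λ = {ℓ : 𝒳 → ℝ≥0 : Σ_x 2^{−ℓ(x)} ≤ 1}, and for z ≥ 0 and a probability mass function Q on 𝒳 set g_{z,Q,P}(x) = (1 − z²/2)·P(x) + z·√(Q(x)·P(x)). Then the infimum over ℓ ∈ Λ of E[ℓ(X)] + E[ℓ(X)²]/(2E[ℓ(X)]) (with X ∼ P) equals the supremum, over pairs (z, Q) with z ≥ 0, Q a pmf on 𝒳, and g_{z,Q,P}(x) ≥ 0 for all x ∈ 𝒳, of Σ_{x∈𝒳} g_{z,Q,P}(x) · log₂( (Σ_{x'∈𝒳}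 g_{z,Q,P}(x')) / g_{z,Q,P}(x) ), where terms with g_{z,Q,P}(x) = 0 are taken to be 0. -/
/-!
Weak duality: for feasible `(z, Q)` with weights `g = g_{z,Q,P}`, Gibbs' inequality against the
sub-probability `2 ^ (-ℓ)` gives `∑ g log₂ (∑ g / g) ≤ ∑ g ℓ = (1 - z² / 2) E[L] + z ∑ √(Q P) ℓ`;
Cauchy-Schwarz (`∑ √(Q P) ℓ ≤ √E[L²]`) and then AM-GM in `z` bound this by
`E[L] + E[L²] / (2 E[L])`.

Strong duality: the cost is continuous and coercive on the Kraft set, so it has a minimizer `ℓ`,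
and at `ℓ` all these inequalities are equalities. For `z = √E[L²] / E[L]` and `Q ∝ P ℓ²` the
weights `g` are the gradient of the cost; the Lagrange condition for the Kraft constraint, which
is tight, makes `g` proportional to `2 ^ (-ℓ)`, the equality case of Gibbs' inequality; and
Euler's identity `∑ g ℓ = cost ℓ` for the positively homogeneous cost closes the gap.
-/

open Real Finset Topology

noncomputable section

namespace AverageAge

variable {𝒳 : Type*} [Fintype 𝒳]

def kraftSum (ℓ : 𝒳 → ℝ) : ℝ := ∑ x, (2 : ℝ) ^ (-ℓ x)

def kraftSet : Set (𝒳 → ℝ) := {ℓ | (∀ x, 0 ≤ ℓ x) ∧ kraftSum ℓ ≤ 1}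

def ageCost (P ℓ : 𝒳 → ℝ) : ℝ :=
  (∑ x, P x * ℓ x) + (∑ x, P x * ℓ x ^ 2) / (2 * ∑ x, P x * ℓ x)

/-- The weights `g_{z,Q,P}` of the dual problem. -/
def ageDualWeight (P : 𝒳 → ℝ) (z : ℝ) (Q : 𝒳 → ℝ) (x : 𝒳) : ℝ :=
  (1 - z ^ 2 / 2) * P x + z * √(Q x * P x)

def unnormalizedEntropy (g : 𝒳 → ℝ) : ℝ := ∑ x, g x * logb 2 ((∑ x', g x') / g x)

lemma pos_of_mem_kraftSet (hcard : 1 < Fintype.card 𝒳) {ℓ : 𝒳 → ℝ} (hℓ : ℓ ∈ kraftSet)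
    (x : 𝒳) : 0 < ℓ x := by
  classical
  obtain ⟨y, hyx⟩ := Fintype.exists_ne_of_one_lt_card hcard x
  refine (hℓ.1 x).lt_of_ne' fun hx => ?_
  have hpair : (2 : ℝ) ^ (-ℓ x) + 2 ^ (-ℓ y) ≤ kraftSum ℓ := by
    rw [kraftSum, ← sum_pair (f := fun z => (2 : ℝ) ^ (-ℓ z)) hyx.symm]
    exact sum_le_sum_of_subset_of_nonneg (subset_univ _) fun z _ _ => by positivity
  rw [hx, neg_zero, rpow_zero] at hpair
  linarith [hℓ.2, rpow_pos_of_pos two_pos (-ℓ y)]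

lemma sum_mul_pos_of_mem_kraftSet (hcard : 1 < Fintype.card 𝒳) {P ℓ : 𝒳 → ℝ}
    (hP : ∀ x, 0 < P x) (hℓ : ℓ ∈ kraftSet) : 0 < ∑ x, P x * ℓ x :=
  have : Nonempty 𝒳 := Fintype.card_pos_iff.1 (by omega)
  sum_pos (fun x _ => mul_pos (hP x) (pos_of_mem_kraftSet hcard hℓ x)) univ_nonempty

lemma ageCost_pos (hcard : 1 < Fintype.card 𝒳) {P ℓ : 𝒳 → ℝ} (hP : ∀ x, 0 < P x)
    (hℓ : ℓ ∈ kraftSet) : 0 < ageCost P ℓ := by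
  have hm := sum_mul_pos_of_mem_kraftSet hcard hP hℓ
  have hs : 0 ≤ ∑ x, P x * ℓ x ^ 2 := sum_nonneg fun x _ => mul_nonneg (hP x).le (sq_nonneg _)
  rw [ageCost]
  positivity

lemma mul_log_div_le_sub {c g : ℝ} (hc : 0 < c) (hg : 0 ≤ g) : g * log (c / g) ≤ c - g := by
  rcases hg.eq_or_lt with rfl | hg
  · simpa using hc.le
  · have := log_le_sub_one_of_pos (div_pos hc hg)
    calc g * log (c / g) ≤ g * (c / g - 1) := by gcongr
      _ = c - g := by field_simp

lemma unnormalizedEntropy_le_sum_mul {g ℓ : 𝒳 → ℝ} (hg : ∀ x, 0 ≤ g x)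
    (hk : kraftSum ℓ ≤ 1) : unnormalizedEntropy g ≤ ∑ x, g x * ℓ x := by
  set G := ∑ x, g x
  rcases (sum_nonneg fun x _ => hg x : 0 ≤ G).eq_or_lt with hG | hG
  · have hg0 : ∀ x, g x = 0 := fun x =>
      (sum_eq_zero_iff_of_nonneg fun y _ => hg y).1 hG.symm x (mem_univ x)
    simp [unnormalizedEntropy, hg0]
  have hlog2 : 0 < log 2 := log_pos one_lt_two
  have key : ∀ x, g x * log (G / g x) ≤ G * 2 ^ (-ℓ x) - g x + g x * ℓ x * log 2 := by
    intro x
    rcases (hg x).eq_or_lt with hgx | hgx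
    · simp [← hgx]; positivity
    have h2 : (0 : ℝ) < 2 ^ (-ℓ x) := by positivity
    have hsplit : log (G / g x) = log (G * 2 ^ (-ℓ x) / g x) + ℓ x * log 2 := by
      rw [← log_rpow two_pos, ← log_mul (by positivity) (by positivity), rpow_neg two_pos.le]
      field_simp
    rw [hsplit, mul_add]
    linarith [mul_log_div_le_sub (mul_pos hG h2) (hg x)]
  have hsum : ∑ x, g x * log (G / g x) ≤ (∑ x, g x * ℓ x) * log 2 := by
    calc ∑ x, g x * log (G / g x)
        ≤ ∑ x, (G * 2 ^ (-ℓ x) - g x + g x * ℓ x * log 2) := sum_le_sum fun x _ => key x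
      _ = G * (kraftSum ℓ - 1) + (∑ x, g x * ℓ x) * log 2 := by
        rw [kraftSum, mul_sub, mul_sum, mul_one, sum_add_distrib, sum_sub_distrib, sum_mul]
      _ ≤ (∑ x, g x * ℓ x) * log 2 := by nlinarith
  simp only [unnormalizedEntropy, logb, mul_div_assoc', ← sum_div]
  rwa [div_le_iff₀ hlog2]

lemma unnormalizedEntropy_eq_sum_mul {ν : ℝ} {ℓ : 𝒳 → ℝ} (hν : ν ≠ 0) (hk : kraftSum ℓ = 1) :
    unnormalizedEntropy (fun x => ν * 2 ^ (-ℓ x)) = ∑ x, ν * 2 ^ (-ℓ x) * ℓ x := by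
  have hsum : ∑ x, ν * (2 : ℝ) ^ (-ℓ x) = ν := by rw [← mul_sum, ← kraftSum, hk, mul_one]
  refine sum_congr rfl fun x _ => ?_
  rw [hsum, div_mul_cancel_left₀ hν, ← rpow_neg two_pos.le, neg_neg,
    logb_rpow two_pos (by norm_num)]

lemma sum_sqrt_mul_mul_le {P Q ℓ : 𝒳 → ℝ} (hP : ∀ x, 0 ≤ P x) (hQ : ∀ x, 0 ≤ Q x)
    (hQsum : ∑ x, Q x = 1) : ∑ x, √(Q x * P x) * ℓ x ≤ √(∑ x, P x * ℓ x ^ 2) := by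
  have hCS := sum_sq_le_sum_mul_sum_of_sq_le_mul univ (r := fun x => √(Q x * P x) * ℓ x)
    (fun x _ => hQ x) (fun x _ => mul_nonneg (hP x) (sq_nonneg (ℓ x)))
    fun x _ => le_of_eq <| by rw [mul_pow, sq_sqrt (mul_nonneg (hQ x) (hP x))]; ring
  rw [hQsum, one_mul] at hCS
  exact (le_abs_self _).trans (abs_le_sqrt hCS)

lemma sum_ageDualWeight_mul_le_ageCost {P Q ℓ : 𝒳 → ℝ} {z : ℝ} (hP : ∀ x, 0 ≤ P x)
    (hm : 0 < ∑ x, P x * ℓ x) (hz : 0 ≤ z) (hQ : ∀ x, 0 ≤ Q x) (hQsum : ∑ x, Q x = 1) :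
    ∑ x, ageDualWeight P z Q x * ℓ x ≤ ageCost P ℓ := by
  set m := ∑ x, P x * ℓ x
  set s := ∑ x, P x * ℓ x ^ 2
  have hsplit : ∑ x, ageDualWeight P z Q x * ℓ x =
      (1 - z ^ 2 / 2) * m + z * ∑ x, √(Q x * P x) * ℓ x := by
    simp only [ageDualWeight, m, mul_sum, ← sum_add_distrib]
    exact sum_congr rfl fun x _ => by ring
  have hs : 0 ≤ s := sum_nonneg fun x _ => mul_nonneg (hP x) (sq_nonneg (ℓ x))
  have hAMGM : z * √s ≤ z ^ 2 * m / 2 + s / (2 * m) := by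
    rw [div_add_div _ _ two_ne_zero (by positivity), le_div_iff₀ (by positivity)]
    nlinarith [sq_nonneg (z * m - √s), sq_sqrt hs]
  rw [hsplit, ageCost]
  nlinarith [mul_le_mul_of_nonneg_left (sum_sqrt_mul_mul_le (ℓ := ℓ) hP hQ hQsum) hz]

lemma unnormalizedEntropy_ageDualWeight_le_ageCost {P Q ℓ : 𝒳 → ℝ} {z : ℝ}
    (hP : ∀ x, 0 ≤ P x) (hk : kraftSum ℓ ≤ 1) (hm : 0 < ∑ x, P x * ℓ x) (hz : 0 ≤ z)
    (hQ : ∀ x, 0 ≤ Q x) (hQsum : ∑ x, Q x = 1) (hg : ∀ x, 0 ≤ ageDualWeight P z Q x) :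
    unnormalizedEntropy (ageDualWeight P z Q) ≤ ageCost P ℓ :=
  (unnormalizedEntropy_le_sum_mul hg hk).trans
    (sum_ageDualWeight_mul_le_ageCost hP hm hz hQ hQsum)

lemma continuous_kraftSum : Continuous (kraftSum : (𝒳 → ℝ) → ℝ) := by
  unfold kraftSum
  fun_prop (disch := norm_num)

lemma isClosed_kraftSet : IsClosed (kraftSet : Set (𝒳 → ℝ)) :=
  (isClosed_le continuous_const continuous_id).inter
    (isClosed_le continuous_kraftSum continuous_const)

lemma const_card_mem_kraftSet :
    (fun _ => (Fintype.card 𝒳 : ℝ)) ∈ (kraftSet : Set (𝒳 → ℝ)) := by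
  refine ⟨fun _ => Nat.cast_nonneg _, ?_⟩
  have h2N : (0 : ℝ) < 2 ^ Fintype.card 𝒳 := by positivity
  rw [kraftSum, sum_const, card_univ, nsmul_eq_mul, rpow_neg two_pos.le, rpow_natCast,
    ← div_eq_mul_inv, div_le_one h2N]
  exact_mod_cast Nat.lt_two_pow_self.le

lemma mul_le_ageCost {P ℓ : 𝒳 → ℝ} (hP : ∀ x, 0 ≤ P x) (hℓ : ∀ x, 0 ≤ ℓ x) (x : 𝒳) :
    P x * ℓ x ≤ ageCost P ℓ := by
  have hm : 0 ≤ ∑ x, P x * ℓ x := sum_nonneg fun x _ => mul_nonneg (hP x) (hℓ x)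
  have hs : 0 ≤ ∑ x, P x * ℓ x ^ 2 := sum_nonneg fun x _ => mul_nonneg (hP x) (sq_nonneg _)
  have := single_le_sum (fun y _ => mul_nonneg (hP y) (hℓ y)) (mem_univ x)
  rw [ageCost]
  linarith [div_nonneg hs (mul_nonneg zero_le_two hm)]

lemma continuousOn_ageCost (hcard : 1 < Fintype.card 𝒳) {P : 𝒳 → ℝ} (hP : ∀ x, 0 < P x) :
    ContinuousOn (ageCost P) kraftSet := by
  refine (Continuous.continuousOn (by fun_prop)).add
    ((Continuous.continuousOn (by fun_prop)).div (Continuous.continuousOn (by fun_prop)) ?_)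
  exact fun ℓ hℓ => mul_ne_zero two_ne_zero (sum_mul_pos_of_mem_kraftSet hcard hP hℓ).ne'

/-- Outside the compact box `0 ≤ ℓ x ≤ ageCost P ℓ₀ / P x` the cost already exceeds
`ageCost P ℓ₀`, since `P x * ℓ x ≤ ageCost P ℓ`. -/
lemma exists_isMinOn_ageCost (hcard : 1 < Fintype.card 𝒳) {P : 𝒳 → ℝ} (hP : ∀ x, 0 < P x) :
    ∃ ℓ ∈ kraftSet, IsMinOn (ageCost P) kraftSet ℓ := by
  set ℓ₀ : 𝒳 → ℝ := fun _ => (Fintype.card 𝒳 : ℝ)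
  refine (continuousOn_ageCost hcard hP).exists_isMinOn' isClosed_kraftSet
    const_card_mem_kraftSet ?_
  rw [Filter.eventually_inf_principal]
  filter_upwards
    [(isCompact_Icc (a := 0) (b := fun x => ageCost P ℓ₀ / P x)).compl_mem_cocompact]
    with ℓ hbox hℓ
  obtain ⟨x, hx⟩ : ∃ x, ageCost P ℓ₀ / P x < ℓ x := by
    simpa [Set.mem_Icc, Pi.le_def, hℓ.1] using hbox
  rw [div_lt_iff₀ (hP x), mul_comm] at hx
  exact hx.le.trans (mul_le_ageCost (fun y => (hP y).le) hℓ.1 x)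

def ageCostGrad (P ℓ : 𝒳 → ℝ) (x : 𝒳) : ℝ :=
  P x * (1 + ℓ x / (∑ y, P y * ℓ y) - (∑ y, P y * ℓ y ^ 2) / (2 * (∑ y, P y * ℓ y) ^ 2))

lemma sum_ageCostGrad_mul {P ℓ : 𝒳 → ℝ} (hm : ∑ x, P x * ℓ x ≠ 0) :
    ∑ x, ageCostGrad P ℓ x * ℓ x = ageCost P ℓ := by
  simp only [ageCostGrad, ageCost]
  set m := ∑ x, P x * ℓ x
  set s := ∑ x, P x * ℓ x ^ 2
  calc ∑ x, P x * (1 + ℓ x / m - s / (2 * m ^ 2)) * ℓ x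
      = (1 - s / (2 * m ^ 2)) * m + s / m := by
        simp only [m, s, mul_sum, sum_div, ← sum_add_distrib]
        exact sum_congr rfl fun x _ => by ring
    _ = m + s / (2 * m) := by field_simp; ring

lemma ageDualWeight_eq_ageCostGrad {P ℓ : 𝒳 → ℝ} (hP : ∀ x, 0 ≤ P x) (hℓ : ∀ x, 0 ≤ ℓ x)
    (hs : 0 < ∑ x, P x * ℓ x ^ 2) (x : 𝒳) :
    ageDualWeight P (√(∑ x, P x * ℓ x ^ 2) / ∑ x, P x * ℓ x)
      (fun x => P x * ℓ x ^ 2 / ∑ x, P x * ℓ x ^ 2) x = ageCostGrad P ℓ x := by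
  simp only [ageDualWeight, ageCostGrad]
  set m := ∑ x, P x * ℓ x
  set s := ∑ x, P x * ℓ x ^ 2
  have hroot : √(P x * ℓ x ^ 2 / s * P x) = P x * ℓ x / √s := by
    rw [show P x * ℓ x ^ 2 / s * P x = (P x * ℓ x) ^ 2 / s by ring, sqrt_div' _ hs.le,
      sqrt_sq (mul_nonneg (hP x) (hℓ x))]
  have hsqrt : √s ≠ 0 := (sqrt_pos.2 hs).ne'
  rw [hroot, div_pow, sq_sqrt hs.le]
  field_simp
  ring

section Derivative

open ContinuousLinearMap

lemma sum_smul_proj_apply (c v : 𝒳 → ℝ) :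
    (∑ x, c x • proj (R := ℝ) (φ := fun _ : 𝒳 => ℝ) x) v = ∑ x, c x * v x := by
  simp

lemma hasStrictFDerivAt_sum_apply {f : 𝒳 → ℝ → ℝ} {f' ℓ : 𝒳 → ℝ}
    (hf : ∀ x, HasStrictDerivAt (f x) (f' x) (ℓ x)) :
    HasStrictFDerivAt (fun ℓ' : 𝒳 → ℝ => ∑ x, f x (ℓ' x))
      (∑ x, f' x • proj (R := ℝ) (φ := fun _ : 𝒳 => ℝ) x) ℓ :=
  HasStrictFDerivAt.fun_sum fun x _ =>
    (hf x).comp_hasStrictFDerivAt ℓ (hasStrictFDerivAt_apply x ℓ)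

lemma hasStrictFDerivAt_kraftSum (ℓ : 𝒳 → ℝ) :
    HasStrictFDerivAt kraftSum
      (∑ x, (-(log 2 * 2 ^ (-ℓ x))) • proj (R := ℝ) (φ := fun _ : 𝒳 => ℝ) x) ℓ :=
  hasStrictFDerivAt_sum_apply (f := fun _ t => (2 : ℝ) ^ (-t)) fun x =>
    ((hasStrictDerivAt_const_rpow two_pos (-ℓ x)).comp (ℓ x)
      (hasStrictDerivAt_neg (ℓ x))).congr_deriv (by ring)

lemma hasStrictFDerivAt_ageCost {P ℓ : 𝒳 → ℝ} (hm : ∑ x, P x * ℓ x ≠ 0) :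
    HasStrictFDerivAt (ageCost P)
      (∑ x, ageCostGrad P ℓ x • proj (R := ℝ) (φ := fun _ : 𝒳 => ℝ) x) ℓ := by
  set m := ∑ x, P x * ℓ x with hm_def
  set s := ∑ x, P x * ℓ x ^ 2 with hs_def
  have hmean := hasStrictFDerivAt_sum_apply (ℓ := ℓ) fun x =>
    (hasStrictDerivAt_id (ℓ x)).const_mul (P x)
  have hsecond := hasStrictFDerivAt_sum_apply (ℓ := ℓ) fun x =>
    (hasStrictDerivAt_pow 2 (ℓ x)).const_mul (P x)
  have hinv := ((hasStrictDerivAt_inv (mul_ne_zero two_ne_zero hm)).comp m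
    ((hasStrictDerivAt_id m).const_mul 2)).comp_hasStrictFDerivAt ℓ hmean
  refine ((hmean.add (hsecond.mul hinv)).congr_of_eventuallyEq ?_).congr_fderiv ?_
  · exact Filter.Eventually.of_forall fun ℓ' => by simp [ageCost, div_eq_mul_inv]
  · ext v
    simp only [add_apply, smul_apply, sum_smul_proj_apply, smul_eq_mul, id, mul_one,
      ageCostGrad, Function.comp_apply, ← hm_def, ← hs_def]
    clear_value m s
    simp only [mul_sum, ← sum_add_distrib]
    refine sum_congr rfl fun x _ => ?_
    field_simp
    ring

end Derivative

lemma eventually_pos_nhds {ℓ : 𝒳 → ℝ} (hℓ : ∀ x, 0 < ℓ x) : ∀ᶠ ℓ' in 𝓝 ℓ, ∀ x, 0 < ℓ' x :=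
  Filter.eventually_all.2 fun x =>
    continuousAt_const.eventually_lt (continuous_apply x).continuousAt (hℓ x)

section Minimizer

variable {P ℓ : 𝒳 → ℝ}

/-- Otherwise `ℓ` would be an interior local minimum, but the derivative of the cost is nonzero
in the direction `ℓ` by Euler's identity `∑ ageCostGrad P ℓ x * ℓ x = ageCost P ℓ`. -/
lemma kraftSum_eq_one_of_isMinOn (hcard : 1 < Fintype.card 𝒳) (hP : ∀ x, 0 < P x)
    (hℓ : ℓ ∈ kraftSet) (hmin : IsMinOn (ageCost P) kraftSet ℓ) :
    kraftSum ℓ = 1 := by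
  by_contra hne
  have hm := (sum_mul_pos_of_mem_kraftSet hcard hP hℓ).ne'
  have hlocal : IsLocalMin (ageCost P) ℓ := by
    filter_upwards [eventually_pos_nhds (pos_of_mem_kraftSet hcard hℓ),
      continuous_kraftSum.continuousAt.eventually_lt continuousAt_const (hℓ.2.lt_of_ne hne)]
      with ℓ' hpos hk
    exact hmin ⟨fun x => (hpos x).le, hk.le⟩
  have hzero := congrArg (· ℓ)
    (hlocal.hasFDerivAt_eq_zero (hasStrictFDerivAt_ageCost hm).hasFDerivAt)
  simp only [sum_smul_proj_apply, sum_ageCostGrad_mul hm, zero_apply] at hzero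
  exact (ageCost_pos hcard hP hℓ).ne' hzero

lemma exists_ageCostGrad_eq_of_isMinOn (hcard : 1 < Fintype.card 𝒳) (hP : ∀ x, 0 < P x)
    (hℓ : ℓ ∈ kraftSet) (hmin : IsMinOn (ageCost P) kraftSet ℓ) :
    ∃ ν, 0 < ν ∧ ∀ x, ageCostGrad P ℓ x = ν * 2 ^ (-ℓ x) := by
  classical
  have : Nonempty 𝒳 := Fintype.card_pos_iff.1 (by omega)
  have hpos := pos_of_mem_kraftSet hcard hℓ
  have hm := (sum_mul_pos_of_mem_kraftSet hcard hP hℓ).ne'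
  have hextr : IsLocalExtrOn (ageCost P) {ℓ' | kraftSum ℓ' = kraftSum ℓ} ℓ := by
    refine Or.inl ?_
    filter_upwards [nhdsWithin_le_nhds (eventually_pos_nhds hpos), self_mem_nhdsWithin]
      with ℓ' hpos' hk
    exact hmin ⟨fun x => (hpos' x).le, hk.trans_le hℓ.2⟩
  obtain ⟨a, b, hab, hab0⟩ := hextr.exists_multipliers_of_hasStrictFDerivAt_1d
    (hasStrictFDerivAt_kraftSum ℓ) (hasStrictFDerivAt_ageCost hm)
  have hcoord : ∀ y, a * -(log 2 * 2 ^ (-ℓ y)) + b * ageCostGrad P ℓ y = 0 := fun y => by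
    simpa [sum_smul_proj_apply, Pi.single_apply] using congrArg (· (Pi.single y 1)) hab0
  have hb : b ≠ 0 := by
    rintro rfl
    obtain ⟨y⟩ := ‹Nonempty 𝒳›
    have : a = 0 := by
      simpa [(log_pos one_lt_two).ne', (rpow_pos_of_pos two_pos _).ne'] using hcoord y
    exact hab (by simp [this])
  have hgrad : ∀ x, ageCostGrad P ℓ x = a * log 2 / b * 2 ^ (-ℓ x) := fun x => by
    field_simp
    linear_combination hcoord x
  refine ⟨_, ?_, hgrad⟩
  have heuler : ageCost P ℓ = a * log 2 / b * ∑ x, 2 ^ (-ℓ x) * ℓ x := by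
    rw [← sum_ageCostGrad_mul hm, mul_sum]
    exact sum_congr rfl fun x _ => by rw [hgrad]; ring
  have hweighted : 0 < ∑ x, (2 : ℝ) ^ (-ℓ x) * ℓ x :=
    sum_pos (fun x _ => mul_pos (rpow_pos_of_pos two_pos _) (hpos x)) univ_nonempty
  exact pos_of_mul_pos_left (heuler ▸ ageCost_pos hcard hP hℓ) hweighted.le

lemma exists_ageDualWeight_of_isMinOn (hcard : 1 < Fintype.card 𝒳) (hP : ∀ x, 0 < P x)
    (hℓ : ℓ ∈ kraftSet) (hmin : IsMinOn (ageCost P) kraftSet ℓ) :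
    ∃ z Q, 0 ≤ z ∧ (∀ x, 0 ≤ Q x) ∧ ∑ x, Q x = 1 ∧ (∀ x, 0 ≤ ageDualWeight P z Q x) ∧
      ageCost P ℓ = unnormalizedEntropy (ageDualWeight P z Q) := by
  have hpos := pos_of_mem_kraftSet hcard hℓ
  have hm := sum_mul_pos_of_mem_kraftSet hcard hP hℓ
  have : Nonempty 𝒳 := Fintype.card_pos_iff.1 (by omega)
  have hs : 0 < ∑ x, P x * ℓ x ^ 2 :=
    sum_pos (fun x _ => mul_pos (hP x) (pow_pos (hpos x) 2)) univ_nonempty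
  obtain ⟨ν, hν, hgrad⟩ := exists_ageCostGrad_eq_of_isMinOn hcard hP hℓ hmin
  set z := √(∑ x, P x * ℓ x ^ 2) / ∑ x, P x * ℓ x
  set Q := fun x => P x * ℓ x ^ 2 / ∑ x, P x * ℓ x ^ 2
  have hweight : ageDualWeight P z Q = fun x => ν * 2 ^ (-ℓ x) := by
    ext x
    rw [ageDualWeight_eq_ageCostGrad (fun x => (hP x).le) (fun x => (hpos x).le) hs, hgrad]
  refine ⟨z, Q, by positivity, fun x => div_nonneg (mul_nonneg (hP x).le (sq_nonneg _)) hs.le,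
    ?_, ?_, ?_⟩
  · rw [← sum_div, div_self hs.ne']
  · rw [hweight]
    exact fun x => by positivity
  · rw [hweight,
      unnormalizedEntropy_eq_sum_mul hν.ne' (kraftSum_eq_one_of_isMinOn hcard hP hℓ hmin),
      ← sum_ageCostGrad_mul hm.ne']
    simp only [hgrad]

end Minimizer

end AverageAge

end

open AverageAge in
theorem stmt_7_general {𝒳 : Type*} [Fintype 𝒳] (hcard : 2 ≤ Fintype.card 𝒳)
    (P : 𝒳 → ℝ) (hP : ∀ x, 0 < P x) :
    sInf {c : ℝ | ∃ ℓ : 𝒳 → ℝ, (∀ x, 0 ≤ ℓ x) ∧ (∑ x, (2 : ℝ) ^ (-ℓ x) ≤ 1) ∧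
        c = (∑ x, P x * ℓ x) + (∑ x, P x * ℓ x ^ 2) / (2 * ∑ x, P x * ℓ x)} =
    sSup {c : ℝ | ∃ z : ℝ, ∃ Q : 𝒳 → ℝ, 0 ≤ z ∧ (∀ x, 0 ≤ Q x) ∧ (∑ x, Q x = 1) ∧
        (∀ x, 0 ≤ (1 - z ^ 2 / 2) * P x + z * Real.sqrt (Q x * P x)) ∧
        c = ∑ x, ((1 - z ^ 2 / 2) * P x + z * Real.sqrt (Q x * P x)) *
              Real.logb 2 ((∑ x', ((1 - z ^ 2 / 2) * P x' + z * Real.sqrt (Q x' * P x'))) /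
                ((1 - z ^ 2 / 2) * P x + z * Real.sqrt (Q x * P x)))} := by
  obtain ⟨ℓ, hℓ, hmin⟩ := exists_isMinOn_ageCost hcard hP
  obtain ⟨z, Q, hz, hQ, hQsum, hg, hdual⟩ := exists_ageDualWeight_of_isMinOn hcard hP hℓ hmin
  have hm := sum_mul_pos_of_mem_kraftSet hcard hP hℓ
  refine (IsLeast.csInf_eq (a := ageCost P ℓ) ⟨?_, ?_⟩).trans
    (IsGreatest.csSup_eq ⟨?_, ?_⟩).symm
  · exact ⟨ℓ, hℓ.1, hℓ.2, rfl⟩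
  · rintro _ ⟨ℓ', hℓ'0, hℓ'k, rfl⟩
    exact hmin ⟨hℓ'0, hℓ'k⟩
  · exact ⟨z, Q, hz, hQ, hQsum, hg, hdual⟩
  · rintro _ ⟨z', Q', hz', hQ', hQ'sum, hg', rfl⟩
    exact unnormalizedEntropy_ageDualWeight_le_ageCost (fun x => (hP x).le) hℓ.2 hm hz' hQ' hQ'sum
      hg'

/-- Minmax–maxmin characterization of the minimum average age (Theorem 4 of the paper):
the infimum over real-valued length functions `ℓ ≥ 0` satisfying Kraft's inequality of the
average-age cost `E[L] + E[L²]/(2E[L])` equals the supremum, over `z ≥ 0` and pmfs `Q` on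
`𝒳` with `g_{z,Q,P}(x) = (1 − z²/2)P(x) + z√(Q(x)P(x)) ≥ 0` for all `x`, of
`Σ_x g_{z,Q,P}(x)·log₂(Σ_{x'} g_{z,Q,P}(x') / g_{z,Q,P}(x))`. -/
theorem stmt_7 {𝒳 : Type*} [Fintype 𝒳] (hcard : 2 ≤ Fintype.card 𝒳)
    (P : 𝒳 → ℝ) (hP : ∀ x, 0 < P x) (hPsum : ∑ x, P x = 1) :
    sInf {c : ℝ | ∃ ℓ : 𝒳 → ℝ, (∀ x, 0 ≤ ℓ x) ∧ (∑ x, (2 : ℝ) ^ (-ℓ x) ≤ 1) ∧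
        c = (∑ x, P x * ℓ x) + (∑ x, P x * ℓ x ^ 2) / (2 * ∑ x, P x * ℓ x)} =
    sSup {c : ℝ | ∃ z : ℝ, ∃ Q : 𝒳 → ℝ, 0 ≤ z ∧ (∀ x, 0 ≤ Q x) ∧ (∑ x, Q x = 1) ∧
        (∀ x, 0 ≤ (1 - z ^ 2 / 2) * P x + z * Real.sqrt (Q x * P x)) ∧
        c = ∑ x, ((1 - z ^ 2 / 2) * P x + z * Real.sqrt (Q x * P x)) *
              Real.logb 2 ((∑ x', ((1 - z ^ 2 / 2) * P x' + z * Real.sqrt (Q x' * P x'))) /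
                ((1 - z ^ 2 / 2) * P x + z * Real.sqrt (Q x * P x)))} :=
  stmt_7_general hcard P hP
end

section
/- Let 𝒳 be a finite set with |𝒳| ≥ 2 and P a pmf on 𝒳 with P(x) > 0 for all x. Let Λ = {ℓ : 𝒳 → ℝ≥0 : Σ_x 2^{−ℓ(x)} ≤ 1} and g_{z,Q,P}(x) = (1 − z²/2)·P(x) + z·√(Q(x)·P(x)). Suppose (z*, Q*) with g_{z*,Q*,P}(x) ≥ 0 for all x maximizes Σ_x g_{z,Q,P}(x) · log₂( (Σ_{x'} g_{z,Q,P}(x')) / g_{z,Q,P}(x) ) over all such feasible pairs, and set P*(x) = g_{z*,Q*,P}(x) / Σ_{x'} g_{z*,Q*,P}(x'). Then the length function ℓ*(x) = log₂(1/P*(x)) is the unique minimizer over Λ of the average-age cost E[ℓ(X)] + E[ℓ(X)²]/(2E[ℓ(X)]) (with X ∼ P). -/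
/-!
Writing `t x = z √(Q x / P x)` turns `g_{z,Q,P}` into the tilted weights `P (1 - E_P[t²]/2 + t)`
and the objective into the entropy `H(w) = Σ w log₂ (Σ w / w)` of these weights, to be maximised
over tilts `t ≥ 0` with nonnegative weights.

At a maximiser `t*` every weight is positive, since `H` has infinite slope in any direction that
lifts a zero weight at a linear rate (e.g. towards `t = 0`). The gradient of `H` in the weights is
the vector `ℓ*` of Shannon lengths, so the slope from `t*` towards `τ = ℓ*/E_P[ℓ*]` is
`E_P[ℓ*] · E_P[(τ - t*)²]`; maximality makes it vanish, hence `t* = τ`.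

For `m = E_P[ℓ] > 0` the cost is `Σ w_τ ℓ + E_P[(ℓ - m τ)²]/(2m)` with `w_τ` the weights of `τ`,
i.e. `w*`. The square vanishes at `ℓ*`, and Gibbs' inequality `Σ w* ℓ ≥ H(w*) = Σ w* ℓ*` for Kraft
lengths, strict unless `ℓ = ℓ*`, finishes the proof.
-/

open Real Finset Filter Topology InformationTheory

section

variable {𝒳 : Type*} [Fintype 𝒳]

noncomputable def shannonLength (w : 𝒳 → ℝ) (x : 𝒳) : ℝ := logb 2 ((∑ y, w y) / w x)

noncomputable def weightEntropy (w : 𝒳 → ℝ) : ℝ := ∑ x, w x * shannonLength w x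

lemma rpow_neg_shannonLength {w : 𝒳 → ℝ} {x : 𝒳} (hx : 0 < w x) (hS : 0 < ∑ y, w y) :
    (2 : ℝ) ^ (-shannonLength w x) = w x / ∑ y, w y := by
  rw [shannonLength, ← logb_inv, inv_div, rpow_logb two_pos (by norm_num) (div_pos hx hS)]

lemma sum_rpow_neg_shannonLength {w : 𝒳 → ℝ} (hw : ∀ x, 0 < w x) [Nonempty 𝒳] :
    ∑ x, (2 : ℝ) ^ (-shannonLength w x) = 1 := by
  have hS : 0 < ∑ y, w y := sum_pos (fun x _ => hw x) univ_nonempty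
  simp only [rpow_neg_shannonLength (hw _) hS, ← sum_div, div_self hS.ne']

lemma shannonLength_pos {w : 𝒳 → ℝ} (hw : ∀ x, 0 < w x) (hcard : 1 < Fintype.card 𝒳) (x : 𝒳) :
    0 < shannonLength w x := by
  obtain ⟨y, hyx⟩ := Fintype.exists_ne_of_one_lt_card hcard x
  exact logb_pos one_lt_two <| (one_lt_div (hw x)).2 <|
    single_lt_sum hyx (mem_univ x) (mem_univ y) (hw y) fun z _ _ => (hw z).le

lemma weightEntropy_pos {w : 𝒳 → ℝ} (hw : ∀ x, 0 < w x) (hcard : 1 < Fintype.card 𝒳) :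
    0 < weightEntropy w :=
  have : Nonempty 𝒳 := Fintype.card_pos_iff.1 (by omega)
  sum_pos (fun x _ => mul_pos (hw x) (shannonLength_pos hw hcard x)) univ_nonempty

lemma mul_sub_mul_logb_eq {w S ℓ : ℝ} (hw : 0 < w) (hS : 0 < S) :
    w * ℓ - w * logb 2 (S / w) =
      (w - S * 2 ^ (-ℓ) + S * 2 ^ (-ℓ) * klFun (w / (S * 2 ^ (-ℓ)))) / log 2 := by
  have hc : 0 < S * (2 : ℝ) ^ (-ℓ) := mul_pos hS (rpow_pos_of_pos two_pos _)
  have hlog : log (w / (S * 2 ^ (-ℓ))) = log w - log S + ℓ * log 2 := by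
    rw [log_div hw.ne' hc.ne', log_mul hS.ne' (rpow_pos_of_pos two_pos _).ne', log_rpow two_pos]
    ring
  rw [klFun, hlog, logb, log_div hS.ne' hw.ne']
  field_simp
  ring

lemma sum_mul_sub_weightEntropy {w : 𝒳 → ℝ} (hw : ∀ x, 0 < w x) [Nonempty 𝒳] (ℓ : 𝒳 → ℝ) :
    ∑ x, w x * ℓ x - weightEntropy w =
      ((∑ y, w y) * (1 - ∑ x, (2 : ℝ) ^ (-ℓ x)) + ∑ x, (∑ y, w y) * 2 ^ (-ℓ x) *
        klFun (w x / ((∑ y, w y) * 2 ^ (-ℓ x)))) / log 2 := by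
  have hS : 0 < ∑ y, w y := sum_pos (fun x _ => hw x) univ_nonempty
  rw [weightEntropy, ← sum_sub_distrib]
  simp only [shannonLength, mul_sub_mul_logb_eq (hw _) hS, ← sum_div, sum_add_distrib,
    sum_sub_distrib, ← mul_sum]
  ring

lemma weightEntropy_le_sum_mul [Nonempty 𝒳] {w ℓ : 𝒳 → ℝ} (hw : ∀ x, 0 < w x)
    (hℓ : ∑ x, (2 : ℝ) ^ (-ℓ x) ≤ 1) : weightEntropy w ≤ ∑ x, w x * ℓ x := by
  have hS : 0 < ∑ y, w y := sum_pos (fun x _ => hw x) univ_nonempty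
  have hKL : ∀ x, 0 ≤ (∑ y, w y) * 2 ^ (-ℓ x) *
      klFun (w x / ((∑ y, w y) * 2 ^ (-ℓ x))) := fun x =>
    have hc : 0 < (∑ y, w y) * (2 : ℝ) ^ (-ℓ x) := mul_pos hS (rpow_pos_of_pos two_pos _)
    mul_nonneg hc.le (klFun_nonneg (div_pos (hw x) hc).le)
  have := sum_mul_sub_weightEntropy hw ℓ
  have : 0 ≤ ∑ x, w x * ℓ x - weightEntropy w := by
    rw [this]
    exact div_nonneg (add_nonneg (mul_nonneg hS.le (sub_nonneg.2 hℓ)) (sum_nonneg fun x _ => hKL x))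
      (log_pos one_lt_two).le
  linarith

lemma eq_shannonLength_of_sum_mul_le [Nonempty 𝒳] {w ℓ : 𝒳 → ℝ} (hw : ∀ x, 0 < w x)
    (hℓ : ∑ x, (2 : ℝ) ^ (-ℓ x) ≤ 1) (h : ∑ x, w x * ℓ x ≤ weightEntropy w) :
    ℓ = shannonLength w := by
  set S := ∑ y, w y
  have hS : 0 < S := sum_pos (fun x _ => hw x) univ_nonempty
  have hc : ∀ x, 0 < S * (2 : ℝ) ^ (-ℓ x) := fun x => mul_pos hS (rpow_pos_of_pos two_pos _)
  have hKL : ∀ x, 0 ≤ S * 2 ^ (-ℓ x) * klFun (w x / (S * 2 ^ (-ℓ x))) :=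
    fun x => mul_nonneg (hc x).le (klFun_nonneg (div_pos (hw x) (hc x)).le)
  have hsum : ∑ x, S * 2 ^ (-ℓ x) * klFun (w x / (S * 2 ^ (-ℓ x))) = 0 := by
    have key := sum_mul_sub_weightEntropy hw ℓ
    have hnum : S * (1 - ∑ x, (2 : ℝ) ^ (-ℓ x)) +
        ∑ x, S * 2 ^ (-ℓ x) * klFun (w x / (S * 2 ^ (-ℓ x))) ≤ 0 := by
      have := (div_le_iff₀ (log_pos one_lt_two)).1 (key ▸ sub_nonpos.2 h)
      linarith
    have := mul_nonneg hS.le (sub_nonneg.2 hℓ)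
    linarith [sum_nonneg fun x (_ : x ∈ univ) => hKL x]
  funext x
  have hx := (sum_eq_zero_iff_of_nonneg fun x _ => hKL x).1 hsum x (mem_univ x)
  rw [mul_eq_zero, klFun_eq_zero_iff (div_pos (hw x) (hc x)).le,
    div_eq_one_iff_eq (hc x).ne'] at hx
  have h2 : (2 : ℝ) ^ (-ℓ x) = 2 ^ (-shannonLength w x) := by
    rw [rpow_neg_shannonLength (hw x) hS, eq_div_iff hS.ne', hx.resolve_left (hc x).ne']
    ring
  have := congrArg (logb 2) h2
  rw [logb_rpow two_pos (by norm_num), logb_rpow two_pos (by norm_num)] at this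
  linarith

lemma weightEntropy_eq_negMulLog {w : 𝒳 → ℝ} (hS : ∑ x, w x ≠ 0) :
    weightEntropy w = (∑ x, negMulLog (w x) - negMulLog (∑ x, w x)) / log 2 := by
  have hterm : ∀ x, w x * shannonLength w x = (w x * log (∑ y, w y) + negMulLog (w x)) / log 2 := by
    intro x
    rcases eq_or_ne (w x) 0 with hx | hx
    · simp [hx]
    · rw [shannonLength, logb, log_div hS hx, negMulLog]
      ring
  rw [weightEntropy, sum_congr rfl fun x _ => hterm x, ← sum_div, sum_add_distrib, ← sum_mul,
    negMulLog]
  ring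

lemma weightEntropy_eventuallyEq {w : ℝ → 𝒳 → ℝ} {a : ℝ}
    (hw : ∀ x, ContinuousAt (fun u => w u x) a) (hS : ∑ x, w a x ≠ 0) :
    (fun u => weightEntropy (w u)) =ᶠ[𝓝 a]
      fun u => (∑ x, negMulLog (w u x) - negMulLog (∑ x, w u x)) / log 2 := by
  have hSc : ContinuousAt (fun u => ∑ x, w u x) a := tendsto_finsetSum _ fun x _ => hw x
  filter_upwards [hSc.eventually_ne hS] with u hu using weightEntropy_eq_negMulLog hu

lemma hasDerivAt_weightEntropy [Nonempty 𝒳] {w : ℝ → 𝒳 → ℝ} {w' : 𝒳 → ℝ} {a : ℝ}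
    (hw : ∀ x, HasDerivAt (fun u => w u x) (w' x) a) (hpos : ∀ x, 0 < w a x) :
    HasDerivAt (fun u => weightEntropy (w u)) (∑ x, w' x * shannonLength (w a) x) a := by
  have hS : 0 < ∑ x, w a x := sum_pos (fun x _ => hpos x) univ_nonempty
  have hSd : HasDerivAt (fun u => ∑ x, w u x) (∑ x, w' x) a := HasDerivAt.fun_sum fun x _ => hw x
  have hN := ((HasDerivAt.fun_sum (u := univ) fun x _ =>
    (hasDerivAt_negMulLog (hpos x).ne').comp a (hw x)).fun_sub
    ((hasDerivAt_negMulLog hS.ne').comp a hSd)).div_const (log 2)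
  refine (hN.congr_of_eventuallyEq
    (weightEntropy_eventuallyEq (fun x => (hw x).continuousAt) hS.ne')).congr_deriv ?_
  simp only [shannonLength, logb, log_div hS.ne' (hpos _).ne', mul_sum]
  rw [← sum_sub_distrib, sum_div]
  exact sum_congr rfl fun x _ => by ring

lemma tendsto_slope_negMulLog_comp_atTop {f : ℝ → ℝ} {b a : ℝ} (hf : HasDerivAt f b a)
    (ha : f a = 0) (hb : 0 < b) : Tendsto (slope (negMulLog ∘ f) a) (𝓝[>] a) atTop := by
  have hslope : Tendsto (slope f a) (𝓝[>] a) (𝓝 b) :=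
    hf.tendsto_slope.mono_left (nhdsGT_le_nhdsNE a)
  have hfpos : ∀ᶠ u in 𝓝[>] a, 0 < f u := by
    filter_upwards [hslope.eventually (lt_mem_nhds hb), self_mem_nhdsWithin] with u hu hua
    rw [slope_def_field, ha, sub_zero] at hu
    exact (div_pos_iff_of_pos_right (sub_pos.2 hua)).1 hu
  have hf0 : Tendsto f (𝓝[>] a) (𝓝[>] 0) :=
    tendsto_nhdsWithin_iff.2 ⟨ha ▸ hf.continuousAt.tendsto.mono_left nhdsWithin_le_nhds, hfpos⟩
  refine (hslope.pos_mul_atTop hb (tendsto_neg_atBot_atTop.comp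
    (tendsto_log_nhdsGT_zero.comp hf0))).congr fun u => ?_
  simp only [slope_def_field, Function.comp_apply, ha, negMulLog]
  ring

lemma tendsto_slope_weightEntropy_atTop {w : ℝ → 𝒳 → ℝ} {w' : 𝒳 → ℝ} {a : ℝ}
    (hw : ∀ x, HasDerivAt (fun u => w u x) (w' x) a) (hS : ∑ x, w a x ≠ 0)
    (hzero : ∀ x, w a x = 0 → 0 < w' x) {x₀ : 𝒳} (hx₀ : w a x₀ = 0) :
    Tendsto (slope (fun u => weightEntropy (w u)) a) (𝓝[>] a) atTop := by
  classical
  set s : 𝒳 → ℝ → ℝ := fun x => slope (negMulLog ∘ fun u => w u x) a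
  set sS : ℝ → ℝ := slope (negMulLog ∘ fun u => ∑ x, w u x) a
  have hSd : HasDerivAt (fun u => ∑ x, w u x) (∑ x, w' x) a := HasDerivAt.fun_sum fun x _ => hw x
  have hN := weightEntropy_eventuallyEq (fun x => (hw x).continuousAt) hS
  have hslope : slope (fun u => weightEntropy (w u)) a =ᶠ[𝓝[>] a]
      fun u => (s x₀ u + (∑ x ∈ univ.erase x₀, s x u + -sS u)) / log 2 := by
    filter_upwards [nhdsWithin_le_nhds hN] with u hu
    rw [← add_assoc, add_sum_erase _ (fun x => s x u) (mem_univ x₀)]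
    simp only [s, sS, slope_def_field, Function.comp_apply, hu, hN.eq_of_nhds]
    rw [← sum_div, sum_sub_distrib]
    ring
  have hbdd : ∀ x, IsBoundedUnder (· ≥ ·) (𝓝[>] a) (s x) := by
    intro x
    rcases eq_or_ne (w a x) 0 with h | h
    · exact (tendsto_slope_negMulLog_comp_atTop (hw x) h (hzero x h)).isBoundedUnder_ge_atTop
    · exact (((hasDerivAt_negMulLog h).comp a (hw x)).tendsto_slope.mono_left
        (nhdsGT_le_nhdsNE a)).isBoundedUnder_ge
  have hbddS : IsBoundedUnder (· ≥ ·) (𝓝[>] a) (-sS) :=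
    (((hasDerivAt_negMulLog hS).comp a hSd).tendsto_slope.mono_left
      (nhdsGT_le_nhdsNE a)).neg.isBoundedUnder_ge
  obtain ⟨C, hC⟩ := isBoundedUnder_ge_add (isBoundedUnder_ge_sum _ fun x _ => hbdd x) hbddS
  refine (Tendsto.atTop_div_const (log_pos one_lt_two) ?_).congr' hslope.symm
  have hC' : ∀ᶠ u in 𝓝[>] a, C ≤ ∑ x ∈ univ.erase x₀, s x u + -sS u := by
    filter_upwards [eventually_map.1 hC] with u hu
    simpa only [Finset.sum_apply, Pi.add_apply, Pi.neg_apply] using hu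
  simpa only [add_comm (s x₀ _)] using tendsto_atTop_add_left_of_le' _ C hC'
    (tendsto_slope_negMulLog_comp_atTop (hw x₀) hx₀ (hzero x₀ hx₀))

noncomputable def tiltedWeight (P t : 𝒳 → ℝ) (x : 𝒳) : ℝ :=
  P x * (1 - (∑ y, P y * t y ^ 2) / 2 + t x)

def feasibleTilts (P : 𝒳 → ℝ) : Set (𝒳 → ℝ) :=
  {t | (∀ x, 0 ≤ t x) ∧ ∀ x, 0 ≤ tiltedWeight P t x}

variable {P : 𝒳 → ℝ}

@[simp]
lemma tiltedWeight_zero : tiltedWeight P 0 = P := by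
  ext x; simp [tiltedWeight]

lemma tiltedWeight_sqrt_div (hP : ∀ x, 0 < P x) {Q : 𝒳 → ℝ} (hQ : ∀ x, 0 ≤ Q x)
    (hQsum : ∑ x, Q x = 1) (z : ℝ) (x : 𝒳) :
    tiltedWeight P (fun y => z * √(Q y / P y)) x = (1 - z ^ 2 / 2) * P x + z * √(Q x * P x) := by
  have hq : ∑ y, P y * (z * √(Q y / P y)) ^ 2 = z ^ 2 := by
    simp_rw [mul_pow, sq_sqrt (div_nonneg (hQ _) (hP _).le)]
    calc ∑ y, P y * (z ^ 2 * (Q y / P y)) = z ^ 2 * ∑ y, Q y :=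
          by rw [mul_sum]; exact sum_congr rfl fun y _ => by field_simp [(hP y).ne']
      _ = z ^ 2 := by rw [hQsum, mul_one]
  have hsqrt : √(Q x * P x) = P x * √(Q x / P x) := by
    rw [← sqrt_sq (hP x).le, ← sqrt_mul (sq_nonneg _), sqrt_sq (hP x).le]
    congr 1
    field_simp [(hP x).ne']
  rw [tiltedWeight, hq, hsqrt]
  ring

lemma exists_eq_mul_sqrt_div (hP : ∀ x, 0 < P x) (hPsum : ∑ x, P x = 1) {t : 𝒳 → ℝ}
    (ht : ∀ x, 0 ≤ t x) : ∃ (z : ℝ) (Q : 𝒳 → ℝ), 0 ≤ z ∧ (∀ x, 0 ≤ Q x) ∧ ∑ x, Q x = 1 ∧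
      (fun y => z * √(Q y / P y)) = t := by
  set q := ∑ y, P y * t y ^ 2
  have hq : 0 ≤ q := sum_nonneg fun y _ => mul_nonneg (hP y).le (sq_nonneg _)
  rcases hq.eq_or_lt with hq0 | hq0
  · have ht0 : t = 0 := by
      funext x
      have := (sum_eq_zero_iff_of_nonneg fun y _ => mul_nonneg (hP y).le (sq_nonneg (t y))).1
        hq0.symm x (mem_univ x)
      simpa [(hP x).ne'] using this
    exact ⟨0, P, le_rfl, fun x => (hP x).le, hPsum, by simp [ht0]; rfl⟩
  · refine ⟨√q, fun y => P y * t y ^ 2 / q, sqrt_nonneg _,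
      fun y => div_nonneg (mul_nonneg (hP y).le (sq_nonneg _)) hq,
      by rw [← sum_div, div_self hq0.ne'], funext fun y => ?_⟩
    rw [← sqrt_mul hq, ← sqrt_sq (ht y)]
    congr 1
    field_simp [(hP y).ne', hq0.ne']

lemma hasDerivAt_tiltedWeight_segment (P t s : 𝒳 → ℝ) (x : 𝒳) :
    HasDerivAt (fun u : ℝ => tiltedWeight P (t + u • (s - t)) x)
      (P x * ((s x - t x) - ∑ y, P y * t y * (s y - t y))) 0 := by
  have hsq : ∀ y, HasDerivAt (fun u : ℝ => P y * (t y + u * (s y - t y)) ^ 2)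
      (P y * (2 * t y * (s y - t y))) 0 := fun y => by
    simpa using ((((hasDerivAt_id (0 : ℝ)).mul_const (s y - t y)).const_add (t y)).pow 2).const_mul
      (P y)
  have hlin : HasDerivAt (fun u : ℝ => t x + u * (s x - t x)) (s x - t x) 0 := by
    simpa using ((hasDerivAt_id (0 : ℝ)).mul_const (s x - t x)).const_add (t x)
  have hpath : (fun u : ℝ => tiltedWeight P (t + u • (s - t)) x) = fun u =>
      P x * (1 - (∑ y, P y * (t y + u * (s y - t y)) ^ 2) / 2 + (t x + u * (s x - t x))) := by
    funext u; simp [tiltedWeight]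
  rw [hpath]
  refine (((((HasDerivAt.fun_sum (u := univ) fun y _ => hsq y).div_const 2).const_sub 1).fun_add
    hlin).const_mul (P x)).congr_deriv ?_
  have h2 : ∑ y, P y * (2 * t y * (s y - t y)) = 2 * ∑ y, P y * t y * (s y - t y) := by
    rw [mul_sum]; exact sum_congr rfl fun _ _ => by ring
  rw [h2]
  ring

lemma le_tiltedWeight_segment (hP : ∀ x, 0 ≤ P x) (t s : 𝒳 → ℝ) {u : ℝ} (hu₀ : 0 ≤ u)
    (hu₁ : u ≤ 1) (x : 𝒳) :
    (1 - u) * tiltedWeight P t x + u * tiltedWeight P s x ≤ tiltedWeight P (t + u • (s - t)) x := by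
  have hq : ∑ y, P y * (t y + u * (s y - t y)) ^ 2 ≤
      (1 - u) * ∑ y, P y * t y ^ 2 + u * ∑ y, P y * s y ^ 2 := by
    rw [mul_sum, mul_sum, ← sum_add_distrib]
    refine sum_le_sum fun y _ => ?_
    nlinarith [mul_nonneg (mul_nonneg hu₀ (sub_nonneg.2 hu₁))
      (mul_nonneg (hP y) (sq_nonneg (s y - t y)))]
  simp only [tiltedWeight, Pi.add_apply, Pi.smul_apply, Pi.sub_apply, smul_eq_mul]
  nlinarith [mul_le_mul_of_nonneg_left hq (hP x)]

lemma eventually_slope_nonpos {F : ℝ → ℝ} {a : ℝ} (h : ∀ᶠ u in 𝓝[>] a, F u ≤ F a) :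
    ∀ᶠ u in 𝓝[>] a, slope F a u ≤ 0 := by
  filter_upwards [h, self_mem_nhdsWithin] with u hu hua
  rw [slope_def_field]
  exact div_nonpos_of_nonpos_of_nonneg (sub_nonpos.2 hu) (sub_pos.2 hua).le

lemma HasDerivAt.nonpos_of_eventually_le {F : ℝ → ℝ} {D a : ℝ} (hF : HasDerivAt F D a)
    (h : ∀ᶠ u in 𝓝[>] a, F u ≤ F a) : D ≤ 0 :=
  le_of_tendsto (hF.tendsto_slope.mono_left (nhdsGT_le_nhdsNE a)) (eventually_slope_nonpos h)

lemma eventually_weightEntropy_segment_le {t s : 𝒳 → ℝ} (ht : ∀ x, 0 ≤ t x) (hs : ∀ x, 0 ≤ s x)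
    (hmax : IsMaxOn (fun t => weightEntropy (tiltedWeight P t)) (feasibleTilts P) t)
    (hfeas : ∀ᶠ u in 𝓝[>] (0 : ℝ), ∀ x, 0 ≤ tiltedWeight P (t + u • (s - t)) x) :
    ∀ᶠ u in 𝓝[>] (0 : ℝ),
      weightEntropy (tiltedWeight P (t + u • (s - t))) ≤ weightEntropy (tiltedWeight P t) := by
  filter_upwards [hfeas, Ioo_mem_nhdsGT one_pos] with u hu hu01
  refine hmax ⟨fun x => ?_, hu⟩
  have : 0 ≤ (1 - u) * t x + u * s x :=
    add_nonneg (mul_nonneg (sub_nonneg.2 hu01.2.le) (ht x)) (mul_nonneg hu01.1.le (hs x))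
  simpa only [Pi.add_apply, Pi.smul_apply, Pi.sub_apply, smul_eq_mul, sub_mul, one_mul,
    mul_sub] using by linarith

lemma sum_tiltedWeight_pos_of_isMaxOn (hP : ∀ x, 0 < P x) (hcard : 1 < Fintype.card 𝒳)
    {t : 𝒳 → ℝ} (ht : t ∈ feasibleTilts P)
    (hmax : IsMaxOn (fun t => weightEntropy (tiltedWeight P t)) (feasibleTilts P) t) :
    0 < ∑ x, tiltedWeight P t x := by
  by_contra hS
  have hzero : tiltedWeight P t = 0 := funext fun x =>
    (sum_eq_zero_iff_of_nonneg fun y _ => ht.2 y).1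
      (le_antisymm (not_lt.1 hS) (sum_nonneg fun y _ => ht.2 y)) x (mem_univ x)
  have h0 : (0 : 𝒳 → ℝ) ∈ feasibleTilts P := ⟨fun _ => le_rfl, by simpa using fun x => (hP x).le⟩
  have h : weightEntropy P ≤ weightEntropy (0 : 𝒳 → ℝ) := by simpa [hzero] using hmax h0
  rw [show weightEntropy (0 : 𝒳 → ℝ) = 0 by simp [weightEntropy]] at h
  exact (weightEntropy_pos hP hcard).not_ge h

lemma tiltedWeight_pos_of_isMaxOn (hP : ∀ x, 0 < P x) (hcard : 1 < Fintype.card 𝒳)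
    {t : 𝒳 → ℝ} (ht : t ∈ feasibleTilts P)
    (hmax : IsMaxOn (fun t => weightEntropy (tiltedWeight P t)) (feasibleTilts P) t) (x : 𝒳) :
    0 < tiltedWeight P t x := by
  by_contra! hx
  set w : ℝ → 𝒳 → ℝ := fun u => tiltedWeight P (t + u • (0 - t))
  have hw0 : w 0 = tiltedWeight P t := by simp [w]
  have hderiv := hasDerivAt_tiltedWeight_segment P t 0
  have hslope := tendsto_slope_weightEntropy_atTop (w := w) hderiv
    (by rw [hw0]; exact (sum_tiltedWeight_pos_of_isMaxOn hP hcard ht hmax).ne') ?_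
    (x₀ := x) (by rw [hw0]; exact le_antisymm hx (ht.2 x))
  · have hfeas : ∀ᶠ u in 𝓝[>] (0 : ℝ), ∀ x, 0 ≤ w u x := by
      filter_upwards [Ioo_mem_nhdsGT one_pos] with u hu y
      refine le_trans ?_ (le_tiltedWeight_segment (fun x => (hP x).le) t 0 hu.1.le hu.2.le y)
      simp only [tiltedWeight_zero]
      exact add_nonneg (mul_nonneg (sub_nonneg.2 hu.2.le) (ht.2 y)) (mul_nonneg hu.1.le (hP y).le)
    have hle := eventually_weightEntropy_segment_le ht.1 (fun _ => le_rfl) hmax hfeas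
    rw [← hw0] at hle
    obtain ⟨u, hpos, hnonpos⟩ :=
      ((hslope.eventually_gt_atTop 0).and (eventually_slope_nonpos hle)).exists
    exact hpos.not_ge hnonpos
  · -- a zero weight has `t y = E_P[t²]/2 - 1`, so it grows at rate `P y (1 + E_P[t²]/2)`
    intro y hy
    rw [hw0, tiltedWeight] at hy
    have hty : t y = (∑ z, P z * t z ^ 2) / 2 - 1 := by
      have := (mul_eq_zero.1 hy).resolve_left (hP y).ne'
      linarith
    have hq : 0 ≤ ∑ z, P z * t z ^ 2 := sum_nonneg fun z _ => mul_nonneg (hP z).le (sq_nonneg _)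
    have : ∑ z, P z * t z * ((0 : 𝒳 → ℝ) z - t z) = -∑ z, P z * t z ^ 2 := by
      rw [← sum_neg_distrib]; exact sum_congr rfl fun z _ => by simp; ring
    rw [this, hty]
    simp only [Pi.zero_apply]
    nlinarith [hP y]

lemma sum_mul_sub_sub_mul_eq_sum_mul_sq {P t τ : 𝒳 → ℝ} (hτ : ∑ x, P x * τ x = 1) :
    ∑ x, P x * ((τ x - t x) - ∑ y, P y * t y * (τ y - t y)) * τ x =
      ∑ x, P x * (τ x - t x) ^ 2 :=
  calc ∑ x, P x * ((τ x - t x) - ∑ y, P y * t y * (τ y - t y)) * τ x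
      = ∑ x, P x * (τ x - t x) * τ x - (∑ y, P y * t y * (τ y - t y)) * ∑ x, P x * τ x := by
        rw [mul_sum, ← sum_sub_distrib]; exact sum_congr rfl fun _ _ => by ring
    _ = ∑ x, P x * (τ x - t x) ^ 2 := by
        rw [hτ, mul_one, ← sum_sub_distrib]; exact sum_congr rfl fun _ _ => by ring

lemma eq_shannonLength_div_of_isMaxOn (hP : ∀ x, 0 < P x) (hcard : 1 < Fintype.card 𝒳)
    {t : 𝒳 → ℝ} (ht : t ∈ feasibleTilts P)
    (hmax : IsMaxOn (fun t => weightEntropy (tiltedWeight P t)) (feasibleTilts P) t)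
    (hpos : ∀ x, 0 < tiltedWeight P t x) :
    t = fun x => shannonLength (tiltedWeight P t) x /
      ∑ y, P y * shannonLength (tiltedWeight P t) y := by
  have : Nonempty 𝒳 := Fintype.card_pos_iff.1 (by omega)
  set ℓ := shannonLength (tiltedWeight P t)
  set m := ∑ y, P y * ℓ y
  have hℓ : ∀ x, 0 < ℓ x := shannonLength_pos hpos hcard
  have hm : 0 < m := sum_pos (fun x _ => mul_pos (hP x) (hℓ x)) univ_nonempty
  set τ : 𝒳 → ℝ := fun x => ℓ x / m
  set w : ℝ → 𝒳 → ℝ := fun u => tiltedWeight P (t + u • (τ - t))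
  have hw0 : w 0 = tiltedWeight P t := by simp [w]
  have hderiv := hasDerivAt_tiltedWeight_segment P t τ
  have hfeas : ∀ᶠ u in 𝓝[>] (0 : ℝ), ∀ x, 0 ≤ w u x := by
    refine nhdsWithin_le_nhds <| eventually_all.2 fun x => ?_
    exact (continuousAt_const.eventually_lt (hderiv x).continuousAt
      (by simpa [hw0] using hpos x)).mono fun _ => le_of_lt
  have hle := eventually_weightEntropy_segment_le ht.1 (fun x => (div_pos (hℓ x) hm).le) hmax hfeas
  rw [← hw0] at hle
  have hD := (hasDerivAt_weightEntropy hderiv (by simpa [hw0] using hpos)).nonpos_of_eventually_le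
    hle
  simp only [zero_smul, add_zero] at hD
  have hτ : ∑ x, P x * τ x = 1 := by
    simp only [τ, mul_div_assoc', ← sum_div]; exact div_self hm.ne'
  have hsq : ∑ x, P x * (τ x - t x) ^ 2 ≤ 0 := by
    rw [← sum_mul_sub_sub_mul_eq_sum_mul_sq hτ]
    refine nonpos_of_mul_nonpos_right (le_of_eq_of_le ?_ hD) hm
    rw [mul_sum]
    exact sum_congr rfl fun x _ => by simp only [τ, ℓ]; field_simp
  funext x
  have := (sum_eq_zero_iff_of_nonneg fun y _ => mul_nonneg (hP y).le (sq_nonneg (τ y - t y))).1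
    (le_antisymm hsq (sum_nonneg fun y _ => mul_nonneg (hP y).le (sq_nonneg _))) x (mem_univ x)
  have := (mul_eq_zero.1 this).resolve_left (hP x).ne'
  simp only [τ] at this ⊢
  nlinarith [sq_eq_zero_iff.1 this]

noncomputable def ageCost (P ℓ : 𝒳 → ℝ) : ℝ :=
  ∑ x, P x * ℓ x + (∑ x, P x * ℓ x ^ 2) / (2 * ∑ x, P x * ℓ x)

lemma ageCost_eq_sum_tiltedWeight_mul_add (P ℓ τ : 𝒳 → ℝ) (hm : ∑ x, P x * ℓ x ≠ 0) :
    ageCost P ℓ = ∑ x, tiltedWeight P τ x * ℓ x +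
      (∑ x, P x * (ℓ x - (∑ y, P y * ℓ y) * τ x) ^ 2) / (2 * ∑ x, P x * ℓ x) := by
  rw [ageCost]
  set m := ∑ y, P y * ℓ y
  set q := ∑ y, P y * τ y ^ 2
  have hlin : ∑ x, tiltedWeight P τ x * ℓ x = (1 - q / 2) * m + ∑ x, P x * τ x * ℓ x := by
    rw [mul_sum, ← sum_add_distrib]
    exact sum_congr rfl fun x _ => by rw [tiltedWeight]; ring
  have hsq : ∑ x, P x * (ℓ x - m * τ x) ^ 2 =
      ∑ x, P x * ℓ x ^ 2 - 2 * m * ∑ x, P x * τ x * ℓ x + m ^ 2 * q := by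
    rw [show ∑ x, P x * (ℓ x - m * τ x) ^ 2 = ∑ x, (P x * ℓ x ^ 2 -
        2 * m * (P x * τ x * ℓ x) + m ^ 2 * (P x * τ x ^ 2)) from sum_congr rfl fun x _ => by ring,
      sum_add_distrib, sum_sub_distrib, ← mul_sum, ← mul_sum]
  rw [hlin, hsq]
  field_simp
  ring

lemma sum_tiltedWeight_mul_le_ageCost (hP : ∀ x, 0 ≤ P x) {ℓ : 𝒳 → ℝ}
    (hm : 0 < ∑ x, P x * ℓ x) (τ : 𝒳 → ℝ) : ∑ x, tiltedWeight P τ x * ℓ x ≤ ageCost P ℓ := by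
  rw [ageCost_eq_sum_tiltedWeight_mul_add P ℓ τ hm.ne']
  have := sum_nonneg fun x (_ : x ∈ univ) =>
    mul_nonneg (hP x) (sq_nonneg (ℓ x - (∑ y, P y * ℓ y) * τ x))
  linarith [div_nonneg this (by linarith : (0 : ℝ) ≤ 2 * ∑ x, P x * ℓ x)]

lemma ageCost_eq_sum_tiltedWeight_mul {ℓ : 𝒳 → ℝ} (hm : ∑ x, P x * ℓ x ≠ 0) :
    ageCost P ℓ = ∑ x, tiltedWeight P (fun y => ℓ y / ∑ z, P z * ℓ z) x * ℓ x := by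
  rw [ageCost_eq_sum_tiltedWeight_mul_add P ℓ (fun y => ℓ y / ∑ z, P z * ℓ z) hm]
  simp [mul_div_cancel₀ _ hm]

lemma sum_mul_pos_of_kraft (hP : ∀ x, 0 < P x) (hcard : 1 < Fintype.card 𝒳) {ℓ : 𝒳 → ℝ}
    (hℓ : ∀ x, 0 ≤ ℓ x) (hK : ∑ x, (2 : ℝ) ^ (-ℓ x) ≤ 1) : 0 < ∑ x, P x * ℓ x := by
  refine (sum_nonneg fun x _ => mul_nonneg (hP x).le (hℓ x)).lt_of_ne fun h => ?_
  have hzero : ∀ x, ℓ x = 0 := fun x =>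
    ((mul_eq_zero.1 ((sum_eq_zero_iff_of_nonneg fun y _ => mul_nonneg (hP y).le (hℓ y)).1
      h.symm x (mem_univ x))).resolve_left (hP x).ne')
  simp only [hzero, neg_zero, rpow_zero, sum_const, card_univ, nsmul_eq_mul, mul_one] at hK
  exact absurd hK (by exact_mod_cast hcard.not_ge)

end

/-- Optimality of real Shannon lengths for the tilted pmf `P*` (Theorem 4 of the paper):
if `(z*, Q*)` maximizes `Σ_x g_{z,Q,P}(x)·log₂(Σ_{x'} g_{z,Q,P}(x')/g_{z,Q,P}(x))` over
feasible pairs (`z ≥ 0`, `Q` a pmf, `g_{z,Q,P} ≥ 0` pointwise), where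
`g_{z,Q,P}(x) = (1 − z²/2)P(x) + z√(Q(x)P(x))`, and
`P*(x) = g_{z*,Q*,P}(x)/Σ_{x'} g_{z*,Q*,P}(x')`, then `ℓ*(x) = log₂(1/P*(x))` belongs to
`Λ` and is the unique minimizer over `Λ` of the average-age cost
`E[ℓ(X)] + E[ℓ(X)²]/(2E[ℓ(X)])`. -/
theorem stmt_8 {𝒳 : Type*} [Fintype 𝒳] (hcard : 2 ≤ Fintype.card 𝒳)
    (P : 𝒳 → ℝ) (hP : ∀ x, 0 < P x) (hPsum : ∑ x, P x = 1)
    (g : ℝ → (𝒳 → ℝ) → 𝒳 → ℝ)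
    (hg : g = fun z Q x => (1 - z ^ 2 / 2) * P x + z * Real.sqrt (Q x * P x))
    (zs : ℝ) (Qs : 𝒳 → ℝ) (hzs : 0 ≤ zs) (hQs : ∀ x, 0 ≤ Qs x) (hQssum : ∑ x, Qs x = 1)
    (hfeas : ∀ x, 0 ≤ g zs Qs x)
    (hmax : ∀ (z : ℝ) (Q : 𝒳 → ℝ), 0 ≤ z → (∀ x, 0 ≤ Q x) → (∑ x, Q x = 1) →
      (∀ x, 0 ≤ g z Q x) →
      (∑ x, g z Q x * Real.logb 2 ((∑ x', g z Q x') / g z Q x)) ≤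
        ∑ x, g zs Qs x * Real.logb 2 ((∑ x', g zs Qs x') / g zs Qs x))
    (Pstar : 𝒳 → ℝ) (hPstar : Pstar = fun x => g zs Qs x / ∑ x', g zs Qs x')
    (ℓstar : 𝒳 → ℝ) (hℓstar : ℓstar = fun x => Real.logb 2 (1 / Pstar x)) :
    ((∀ x, 0 ≤ ℓstar x) ∧ (∑ x, (2 : ℝ) ^ (-ℓstar x) ≤ 1)) ∧
    (∀ ℓ : 𝒳 → ℝ, (∀ x, 0 ≤ ℓ x) → (∑ x, (2 : ℝ) ^ (-ℓ x) ≤ 1) →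
      ((∑ x, P x * ℓstar x) + (∑ x, P x * ℓstar x ^ 2) / (2 * ∑ x, P x * ℓstar x) ≤
        (∑ x, P x * ℓ x) + (∑ x, P x * ℓ x ^ 2) / (2 * ∑ x, P x * ℓ x)) ∧
      ((∑ x, P x * ℓ x) + (∑ x, P x * ℓ x ^ 2) / (2 * ∑ x, P x * ℓ x) =
          (∑ x, P x * ℓstar x) + (∑ x, P x * ℓstar x ^ 2) / (2 * ∑ x, P x * ℓstar x) →
        ℓ = ℓstar)) := by
  have : Nonempty 𝒳 := Fintype.card_pos_iff.1 (by omega)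
  have hgt : ∀ z Q, (∀ x, 0 ≤ Q x) → ∑ x, Q x = 1 →
      g z Q = tiltedWeight P (fun y => z * √(Q y / P y)) := fun z Q hQ hQsum => by
    rw [hg]; funext x; exact (tiltedWeight_sqrt_div hP hQ hQsum z x).symm
  set t : 𝒳 → ℝ := fun y => zs * √(Qs y / P y)
  have hgs : g zs Qs = tiltedWeight P t := hgt zs Qs hQs hQssum
  have ht : t ∈ feasibleTilts P := ⟨fun x => mul_nonneg hzs (sqrt_nonneg _), hgs ▸ hfeas⟩
  have hmaxT : IsMaxOn (fun t => weightEntropy (tiltedWeight P t)) (feasibleTilts P) t := by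
    intro t' ht'
    obtain ⟨z, Q, hz, hQ, hQsum, rfl⟩ := exists_eq_mul_sqrt_div hP hPsum ht'.1
    have := hmax z Q hz hQ hQsum (hgt z Q hQ hQsum ▸ ht'.2)
    rwa [hgt z Q hQ hQsum, hgs] at this
  have hpos := tiltedWeight_pos_of_isMaxOn hP hcard ht hmaxT
  have hfix := eq_shannonLength_div_of_isMaxOn hP hcard ht hmaxT hpos
  have hℓ : ℓstar = shannonLength (tiltedWeight P t) := by
    rw [hℓstar, hPstar, hgs]; funext x; rw [one_div_div]; rfl
  subst hℓ
  have hkraft := sum_rpow_neg_shannonLength hpos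
  have hnonneg x := (shannonLength_pos hpos hcard x).le
  have hcost : ageCost P (shannonLength (tiltedWeight P t)) = weightEntropy (tiltedWeight P t) := by
    rw [ageCost_eq_sum_tiltedWeight_mul (sum_mul_pos_of_kraft hP hcard hnonneg hkraft.le).ne',
      ← hfix]
    rfl
  refine ⟨⟨hnonneg, hkraft.le⟩, fun ℓ hℓ hK => ?_⟩
  have hle := sum_tiltedWeight_mul_le_ageCost (fun x => (hP x).le)
    (sum_mul_pos_of_kraft hP hcard hℓ hK) t
  exact ⟨hcost.trans_le ((weightEntropy_le_sum_mul hpos hK).trans hle),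
    fun heq => eq_shannonLength_of_sum_mul_le hpos hK (hle.trans (heq.trans hcost).le)⟩
end

section
/- Let 𝒳 be a finite set, P a pmf on 𝒳 with P(x) > 0 for all x, and for z ≥ 0 and a pmf Q on 𝒳 define g_{z,Q,P}(x) = (1 − z²/2)·P(x) + z·√(Q(x)·P(x)) and c_P(z,Q) = Σ_x g_{z,Q,P}(x) · log₂( (Σ_{x'} g_{z,Q,P}(x')) / g_{z,Q,P}(x) ). If (z*, Q*) maximizes c_P(z,Q) over the set 𝒢 = {(z,Q) : z ≥ 0, Q a pmf on 𝒳, g_{z,Q,P}(x) ≥ 0 ∀x}, then Q*(x) = Q*(y) for all x, y ∈ 𝒳 with P(x) = P(y). -/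
/-!
Write `g = g_{z,Q,P}`. Up to the factor `log 2`, the objective is
`S log S - Σ_x g(x) log g(x)` with `S = Σ_x g(x)`. Suppose `P(x) = P(y)` but `Q*(x) ≠ Q*(y)`.
First `z* > 0`: at `z = 0` we have `g = P`, while `(z, Q) = (1, P)` gives `g = 3P/2` and
the objective is positively homogeneous in `g`. Replacing `Q*(x)` and `Q*(y)` by their mean
changes `g` only at `x` and `y`, where both new values equal some `M`, and strict concavity of
`√` gives `M > (g(x) + g(y))/2`. Convexity of `t log t` shows that averaging `g(x)` and `g(y)`
does not decrease the objective, and `m ↦ (2m + C) log(2m + C) - 2 m log m` is strictly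
increasing, so raising the common value to `M` increases it strictly, contradicting maximality.
-/

open Real Finset

section UnnormEntropy

variable {ι : Type*} [Fintype ι]

noncomputable def unnormEntropy (G : ι → ℝ) : ℝ :=
  ∑ w, G w * logb 2 ((∑ w', G w') / G w)

lemma unnormEntropy_eq {G : ι → ℝ} (hG : ∀ w, 0 ≤ G w) :
    unnormEntropy G = ((∑ w, G w) * log (∑ w, G w) - ∑ w, G w * log (G w)) / log 2 := by
  have hterm : ∀ w, G w * logb 2 ((∑ w', G w') / G w)
      = ((G w * log (∑ w', G w')) - G w * log (G w)) / log 2 := by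
    intro w
    rcases (hG w).eq_or_lt with h | h
    · simp [← h]
    · have hS : 0 < ∑ w', G w' := h.trans_le (single_le_sum (fun i _ => hG i) (mem_univ w))
      rw [logb, log_div hS.ne' h.ne']
      ring
  rw [unnormEntropy, sum_congr rfl fun w _ => hterm w, ← sum_div, sum_sub_distrib, ← sum_mul]

lemma unnormEntropy_const_mul (c : ℝ) (G : ι → ℝ) :
    unnormEntropy (fun w => c * G w) = c * unnormEntropy G := by
  rcases eq_or_ne c 0 with rfl | hc
  · simp [unnormEntropy]
  · simp only [unnormEntropy, ← mul_sum, mul_div_mul_left _ _ hc, mul_assoc]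

lemma unnormEntropy_pos {G : ι → ℝ} (hG : ∀ w, 0 < G w) {x y : ι} (hxy : x ≠ y) :
    0 < unnormEntropy G := by
  classical
  have hle : ∀ w, G w ≤ ∑ w', G w' := fun w =>
    single_le_sum (fun i _ => (hG i).le) (mem_univ w)
  have hx_lt : G x < ∑ w, G w := by
    rw [← add_sum_erase _ G (mem_univ x)]
    have := single_le_sum (fun i _ => (hG i).le) (mem_erase.2 ⟨hxy.symm, mem_univ y⟩)
    linarith [hG y]
  refine sum_pos' (fun w _ => ?_) ⟨x, mem_univ x, ?_⟩
  · exact mul_nonneg (hG w).le (logb_nonneg one_lt_two ((one_le_div (hG w)).2 (hle w)))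
  · exact mul_pos (hG x) (logb_pos one_lt_two ((one_lt_div (hG x)).2 hx_lt))

lemma strictMonoOn_mul_log_two_mul_add_sub {C : ℝ} (hC : 0 ≤ C) :
    StrictMonoOn (fun m => (2 * m + C) * log (2 * m + C) - 2 * (m * log m)) (Set.Ici 0) := by
  apply strictMonoOn_of_deriv_pos (convex_Ici 0)
  · exact ((continuous_mul_log.comp (by fun_prop)).sub
      (continuous_const.mul continuous_mul_log)).continuousOn
  · intro m hm
    rw [interior_Ici] at hm
    have hm : 0 < m := hm
    have hmC : 0 < 2 * m + C := by linarith
    have hlin : HasDerivAt (fun m : ℝ => 2 * m + C) 2 m := by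
      simpa using ((hasDerivAt_id m).const_mul 2).add_const C
    have hcomp : HasDerivAt (fun m => (2 * m + C) * log (2 * m + C))
        ((log (2 * m + C) + 1) * 2) m := by
      have h := (hasDerivAt_mul_log hmC.ne').comp m hlin
      exact h
    have hderiv : HasDerivAt (fun m => (2 * m + C) * log (2 * m + C) - 2 * (m * log m))
        ((log (2 * m + C) + 1) * 2 - 2 * (log m + 1)) m :=
      hcomp.sub ((hasDerivAt_mul_log hm.ne').const_mul 2)
    rw [hderiv.deriv]
    linarith [log_lt_log hm (by linarith : m < 2 * m + C)]

lemma mul_log_pair_lt {A B C M : ℝ} (hA : 0 ≤ A) (hB : 0 ≤ B) (hC : 0 ≤ C)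
    (hM : (A + B) / 2 < M) :
    (A + B + C) * log (A + B + C) - (A * log A + B * log B)
      < (2 * M + C) * log (2 * M + C) - 2 * (M * log M) := by
  have hconv : (A + B) * log ((A + B) / 2) ≤ A * log A + B * log B := by
    have h := convexOn_mul_log.2 (Set.mem_Ici.2 hA) (Set.mem_Ici.2 hB)
      (by norm_num : (0 : ℝ) ≤ 1 / 2) (by norm_num : (0 : ℝ) ≤ 1 / 2) (by norm_num)
    simp only [smul_eq_mul] at h
    rw [show 1 / 2 * A + 1 / 2 * B = (A + B) / 2 by ring] at h
    linarith
  have hmean : 0 ≤ (A + B) / 2 := by positivity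
  have hmono := strictMonoOn_mul_log_two_mul_add_sub hC hmean (hmean.trans hM.le) hM
  simp only [show 2 * ((A + B) / 2) + C = A + B + C by ring] at hmono
  linarith

omit [Fintype ι] in
lemma nonneg_of_eq_off_pair {G G' : ι → ℝ} (hG : ∀ w, 0 ≤ G w) {x y : ι}
    (hoff : ∀ w, w ≠ x → w ≠ y → G' w = G w) (hG'y : G' y = G' x)
    (hmean : (G x + G y) / 2 < G' x) (w : ι) : 0 ≤ G' w := by
  by_cases hwx : w = x
  · subst hwx; linarith [hG w, hG y]
  by_cases hwy : w = y
  · subst hwy; rw [hG'y]; linarith [hG w, hG x]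
  rw [hoff w hwx hwy]; exact hG w

lemma unnormEntropy_lt_of_pair [DecidableEq ι] {G G' : ι → ℝ} (hG : ∀ w, 0 ≤ G w)
    {x y : ι} (hxy : x ≠ y) (hoff : ∀ w, w ≠ x → w ≠ y → G' w = G w)
    (hG'y : G' y = G' x) (hmean : (G x + G y) / 2 < G' x) :
    unnormEntropy G < unnormEntropy G' := by
  have hG' := nonneg_of_eq_off_pair hG hoff hG'y hmean
  set D := (univ.erase x).erase y
  have split : ∀ F : ι → ℝ, ∑ w, F w = F x + F y + ∑ w ∈ D, F w := fun F => by
    rw [← add_sum_erase _ F (mem_univ x),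
      ← add_sum_erase _ F (mem_erase.2 ⟨hxy.symm, mem_univ y⟩), add_assoc]
  have hoffD : ∀ w ∈ D, G' w = G w := fun w hw => by
    simp only [D, mem_erase] at hw
    exact hoff w hw.2.1 hw.1
  have hpair := mul_log_pair_lt (hG x) (hG y) (sum_nonneg (s := D) fun w _ => hG w) hmean
  have hrest : ∑ w ∈ D, G' w = ∑ w ∈ D, G w := sum_congr rfl hoffD
  have hrest_log : ∑ w ∈ D, G' w * log (G' w) = ∑ w ∈ D, G w * log (G w) :=
    sum_congr rfl fun w hw => by rw [hoffD w hw]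
  rw [unnormEntropy_eq hG, unnormEntropy_eq hG', split G, split G',
    split (fun w => G w * log (G w)), split (fun w => G' w * log (G' w)), hrest, hrest_log, hG'y]
  apply div_lt_div_of_pos_right _ (log_pos one_lt_two)
  simp only [← two_mul]
  linarith

end UnnormEntropy

section Tilt

variable {ι : Type*}

-- `tilt P z Q` is `g_{z,Q,P}`, and `c_P(z, Q) = unnormEntropy (tilt P z Q)`.
noncomputable def tilt (P : ι → ℝ) (z : ℝ) (Q : ι → ℝ) (x : ι) : ℝ :=
  (1 - z ^ 2 / 2) * P x + z * √(Q x * P x)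

lemma tilt_zero (P Q : ι → ℝ) : tilt P 0 Q = P := by
  funext w; simp [tilt]

lemma tilt_one_self {P : ι → ℝ} (hP : ∀ w, 0 ≤ P w) : tilt P 1 P = fun w => 3 / 2 * P w := by
  funext w; rw [tilt, sqrt_mul_self (hP w)]; ring

noncomputable def pairAverage [DecidableEq ι] (Q : ι → ℝ) (x y : ι) (w : ι) : ℝ :=
  (Q w + Q (Equiv.swap x y w)) / 2

variable [DecidableEq ι] {Q : ι → ℝ} {x y : ι}

lemma pairAverage_apply_left : pairAverage Q x y x = (Q x + Q y) / 2 := by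
  simp [pairAverage]

lemma pairAverage_apply_right : pairAverage Q x y y = (Q x + Q y) / 2 := by
  simp [pairAverage, add_comm]

lemma pairAverage_apply_of_ne {w : ι} (hwx : w ≠ x) (hwy : w ≠ y) :
    pairAverage Q x y w = Q w := by
  simp [pairAverage, Equiv.swap_apply_of_ne_of_ne hwx hwy]

lemma pairAverage_nonneg (hQ : ∀ w, 0 ≤ Q w) (w : ι) : 0 ≤ pairAverage Q x y w :=
  div_nonneg (add_nonneg (hQ w) (hQ _)) zero_le_two

lemma sum_pairAverage [Fintype ι] : ∑ w, pairAverage Q x y w = ∑ w, Q w := by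
  simp only [pairAverage, ← sum_div, sum_add_distrib,
    Equiv.sum_comp (Equiv.swap x y) Q, add_self_div_two]

variable {P : ι → ℝ} {z : ℝ}

lemma tilt_pairAverage_of_ne {w : ι} (hwx : w ≠ x) (hwy : w ≠ y) :
    tilt P z (pairAverage Q x y) w = tilt P z Q w := by
  rw [tilt, tilt, pairAverage_apply_of_ne hwx hwy]

lemma tilt_pairAverage_right (hPxy : P x = P y) :
    tilt P z (pairAverage Q x y) y = tilt P z (pairAverage Q x y) x := by
  rw [tilt, tilt, pairAverage_apply_left, pairAverage_apply_right, hPxy]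

lemma mean_tilt_lt_tilt_pairAverage (hz : 0 < z) (hPx : 0 < P x) (hPxy : P x = P y)
    (hQx : 0 ≤ Q x) (hQy : 0 ≤ Q y) (hne : Q x ≠ Q y) :
    (tilt P z Q x + tilt P z Q y) / 2 < tilt P z (pairAverage Q x y) x := by
  have hsqrt := strictConcaveOn_sqrt.2 (Set.mem_Ici.2 (mul_nonneg hQx hPx.le))
    (Set.mem_Ici.2 (mul_nonneg hQy hPx.le)) (fun h => hne (mul_right_cancel₀ hPx.ne' h))
    (by norm_num : (0 : ℝ) < 1 / 2) (by norm_num : (0 : ℝ) < 1 / 2) (by norm_num)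
  simp only [smul_eq_mul] at hsqrt
  rw [tilt, tilt, tilt, pairAverage_apply_left, ← hPxy,
    show (Q x + Q y) / 2 * P x = 1 / 2 * (Q x * P x) + 1 / 2 * (Q y * P x) by ring]
  nlinarith [mul_lt_mul_of_pos_left hsqrt hz]

end Tilt

/-- Symmetry of the optimal tilting (Lemma 2 of the paper): if `(z*, Q*)` maximizes
`c_P(z,Q) = Σ_x g_{z,Q,P}(x)·log₂(Σ_{x'} g_{z,Q,P}(x')/g_{z,Q,P}(x))` over the feasible
set `𝒢 = {(z,Q) : z ≥ 0, Q a pmf, g_{z,Q,P}(x) ≥ 0 ∀x}`, where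
`g_{z,Q,P}(x) = (1 − z²/2)P(x) + z√(Q(x)P(x))`, then `Q*(x) = Q*(y)` whenever
`P(x) = P(y)`. -/
theorem stmt_9 {𝒳 : Type*} [Fintype 𝒳]
    (P : 𝒳 → ℝ) (hP : ∀ x, 0 < P x) (hPsum : ∑ x, P x = 1)
    (g : ℝ → (𝒳 → ℝ) → 𝒳 → ℝ)
    (hg : g = fun z Q x => (1 - z ^ 2 / 2) * P x + z * Real.sqrt (Q x * P x))
    (zs : ℝ) (Qs : 𝒳 → ℝ) (hzs : 0 ≤ zs) (hQs : ∀ x, 0 ≤ Qs x) (hQssum : ∑ x, Qs x = 1)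
    (hfeas : ∀ x, 0 ≤ g zs Qs x)
    (hmax : ∀ (z : ℝ) (Q : 𝒳 → ℝ), 0 ≤ z → (∀ x, 0 ≤ Q x) → (∑ x, Q x = 1) →
      (∀ x, 0 ≤ g z Q x) →
      (∑ x, g z Q x * Real.logb 2 ((∑ x', g z Q x') / g z Q x)) ≤
        ∑ x, g zs Qs x * Real.logb 2 ((∑ x', g zs Qs x') / g zs Qs x)) :
    ∀ x y : 𝒳, P x = P y → Qs x = Qs y := by
  classical
  obtain rfl : g = tilt P := hg
  intro x y hPxy
  by_contra hne
  have hxy : x ≠ y := fun h => hne (congrArg Qs h)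
  have hzpos : 0 < zs := by
    refine hzs.lt_of_ne fun hz0 => ?_
    have h : unnormEntropy (tilt P 1 P) ≤ unnormEntropy (tilt P zs Qs) :=
      hmax 1 P zero_le_one (fun w => (hP w).le) hPsum
        (by rw [tilt_one_self fun w => (hP w).le]; exact fun w => by linarith [hP w])
    rw [tilt_one_self fun w => (hP w).le, ← hz0, tilt_zero, unnormEntropy_const_mul] at h
    linarith [unnormEntropy_pos hP hxy]
  have hoff : ∀ w, w ≠ x → w ≠ y → tilt P zs (pairAverage Qs x y) w = tilt P zs Qs w :=
    fun w => tilt_pairAverage_of_ne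
  have hy := tilt_pairAverage_right (z := zs) (Q := Qs) hPxy
  have hmean := mean_tilt_lt_tilt_pairAverage hzpos (hP x) hPxy (hQs x) (hQs y) hne
  have hle := hmax zs (pairAverage Qs x y) hzs (pairAverage_nonneg hQs)
    (sum_pairAverage.trans hQssum) (nonneg_of_eq_off_pair hfeas hoff hy hmean)
  exact hle.not_gt (unnormEntropy_lt_of_pair hfeas hxy hoff hy hmean)
end

section
/- Let 𝒳 be a nonempty finite set, P a pmf on 𝒳 with P(x) > 0 for all x, z ≥ 0, and Q a pmf on 𝒳. Define g_{z,Q,P}(x) = (1 + z²/2)·P(x) + z·√(Q(x)·P(x)). Then for every x ∈ 𝒳, log₂( (Σ_{x'∈𝒳} g_{z,Q,P}(x')) / g_{z,Q,P}(x) ) ≤ log₂(1/P(x)) + log₂(1 + 1/√2). -/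
open Real Finset

/-- Bound on the real Shannon lengths of the tilted pmf in the queuing-delay problem:
with `g_{z,Q,P}(x) = (1 + z²/2)P(x) + z√(Q(x)P(x))`, for every symbol `x`,
`log₂(Σ_{x'} g_{z,Q,P}(x') / g_{z,Q,P}(x)) ≤ log₂(1/P(x)) + log₂(1 + 1/√2)`. -/
theorem stmt_15 {𝒳 : Type*} [Fintype 𝒳] [Nonempty 𝒳]
    (P : 𝒳 → ℝ) (hP : ∀ x, 0 < P x) (hPsum : ∑ x, P x = 1)
    (z : ℝ) (hz : 0 ≤ z)
    (Q : 𝒳 → ℝ) (hQ : ∀ x, 0 ≤ Q x) (hQsum : ∑ x, Q x = 1) (x : 𝒳) :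
    Real.logb 2 ((∑ x', ((1 + z ^ 2 / 2) * P x' + z * Real.sqrt (Q x' * P x'))) /
        ((1 + z ^ 2 / 2) * P x + z * Real.sqrt (Q x * P x))) ≤
      Real.logb 2 (1 / P x) + Real.logb 2 (1 + 1 / Real.sqrt 2) := by
  have hzsq : (0:ℝ) < 1 + z ^ 2 / 2 := by positivity
  have hgx : 0 < (1 + z ^ 2 / 2) * P x + z * Real.sqrt (Q x * P x) := by
    have := hP x
    have : 0 ≤ z * Real.sqrt (Q x * P x) := by positivity
    nlinarith [hP x]
  -- Cauchy-Schwarz: ∑ √(Q P) ≤ 1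
  have hCS : ∑ x', Real.sqrt (Q x' * P x') ≤ 1 := by
    have h1 : ∀ x', Real.sqrt (Q x' * P x') = Real.sqrt (Q x') * Real.sqrt (P x') := by
      intro x'; exact Real.sqrt_mul (hQ x') _
    calc ∑ x', Real.sqrt (Q x' * P x')
        = ∑ x', Real.sqrt (Q x') * Real.sqrt (P x') := by simp_rw [h1]
      _ ≤ Real.sqrt (∑ x', Q x') * Real.sqrt (∑ x', P x') :=
          Real.sum_sqrt_mul_sqrt_le _ hQ (fun i => (hP i).le)
      _ = 1 := by rw [hQsum, hPsum, Real.sqrt_one, mul_one]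
  have hnum : ∑ x', ((1 + z ^ 2 / 2) * P x' + z * Real.sqrt (Q x' * P x'))
      ≤ (1 + z ^ 2 / 2) + z := by
    rw [Finset.sum_add_distrib, ← Finset.mul_sum, hPsum, ← Finset.mul_sum]
    have := mul_le_mul_of_nonneg_left hCS hz
    linarith
  -- key ratio bound as a product bound
  have hsqrt2 : (0:ℝ) < Real.sqrt 2 := by positivity
  have hkey : (1 + z ^ 2 / 2) + z ≤
      (1 + 1 / Real.sqrt 2) * ((1 + z ^ 2 / 2) * P x + z * Real.sqrt (Q x * P x)) / P x := by
    rw [le_div_iff₀ (hP x)]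
    have h1 : z * Real.sqrt 2 ≤ 1 + z ^ 2 / 2 := by
      nlinarith [sq_nonneg (z - Real.sqrt 2), Real.sq_sqrt (by norm_num : (0:ℝ) ≤ 2)]
    have h2 : 0 ≤ z * Real.sqrt (Q x * P x) := by positivity
    have h3 : (1 + 1 / Real.sqrt 2) * ((1 + z ^ 2 / 2) * P x + z * Real.sqrt (Q x * P x))
        ≥ (1 + 1 / Real.sqrt 2) * ((1 + z ^ 2 / 2) * P x) := by
      have : (0:ℝ) < 1 + 1 / Real.sqrt 2 := by positivity
      nlinarith
    have h4 : ((1 + z ^ 2 / 2) + z) * P x ≤ (1 + 1 / Real.sqrt 2) * ((1 + z ^ 2 / 2) * P x) := by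
      have hinv : z ≤ (1 / Real.sqrt 2) * (1 + z ^ 2 / 2) := by
        rw [div_mul_eq_mul_div, le_div_iff₀ hsqrt2]
        linarith [h1]
      nlinarith [(hP x).le]
    linarith
  have hAle : (∑ x', ((1 + z ^ 2 / 2) * P x' + z * Real.sqrt (Q x' * P x'))) /
        ((1 + z ^ 2 / 2) * P x + z * Real.sqrt (Q x * P x))
      ≤ (1 / P x) * (1 + 1 / Real.sqrt 2) := by
    rw [div_le_iff₀ hgx]
    calc (∑ x', ((1 + z ^ 2 / 2) * P x' + z * Real.sqrt (Q x' * P x')))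
        ≤ (1 + z ^ 2 / 2) + z := hnum
      _ ≤ (1 + 1 / Real.sqrt 2) * ((1 + z ^ 2 / 2) * P x + z * Real.sqrt (Q x * P x)) / P x :=
          hkey
      _ = 1 / P x * (1 + 1 / Real.sqrt 2) * ((1 + z ^ 2 / 2) * P x + z * Real.sqrt (Q x * P x)) := by
          field_simp
  have hpos : 0 < (∑ x', ((1 + z ^ 2 / 2) * P x' + z * Real.sqrt (Q x' * P x'))) /
        ((1 + z ^ 2 / 2) * P x + z * Real.sqrt (Q x * P x)) := by
    apply div_pos _ hgx
    apply Finset.sum_pos _ Finset.univ_nonempty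
    intro i _
    have : 0 ≤ z * Real.sqrt (Q i * P i) := by positivity
    nlinarith [hP i]
  calc Real.logb 2 ((∑ x', ((1 + z ^ 2 / 2) * P x' + z * Real.sqrt (Q x' * P x'))) /
        ((1 + z ^ 2 / 2) * P x + z * Real.sqrt (Q x * P x)))
      ≤ Real.logb 2 ((1 / P x) * (1 + 1 / Real.sqrt 2)) :=
        Real.logb_le_logb_of_le (by norm_num) hpos hAle
    _ = Real.logb 2 (1 / P x) + Real.logb 2 (1 + 1 / Real.sqrt 2) := by
        rw [Real.logb_mul (one_div_ne_zero (hP x).ne') (by positivity)]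
end

section
/- Let 𝒳 be a nonempty finite set, P a pmf on 𝒳 with P(x) > 0 for all x, z ≥ 0, and Q a pmf on 𝒳. Define g_{z,Q,P}(x) = (1 + z²/2)·P(x) + z·√(Q(x)·P(x)) and the tilted pmf P*(x) = g_{z,Q,P}(x) / Σ_{x'} g_{z,Q,P}(x'). Then the Kullback–Leibler divergence satisfies D(P‖P*) = Σ_x P(x) · log₂( P(x) / P*(x) ) ≤ log₂(1 + 1/√2). -/
open Real Finset

/-- KL-divergence bound (Corollary 2 of the paper): with
`g_{z,Q,P}(x) = (1 + z²/2)P(x) + z√(Q(x)P(x))` and the tilted pmf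
`P*(x) = g_{z,Q,P}(x)/Σ_{x'} g_{z,Q,P}(x')`, one has
`D(P‖P*) = Σ_x P(x)·log₂(P(x)/P*(x)) ≤ log₂(1 + 1/√2)`. -/
theorem stmt_16 {𝒳 : Type*} [Fintype 𝒳] [Nonempty 𝒳]
    (P : 𝒳 → ℝ) (hP : ∀ x, 0 < P x) (hPsum : ∑ x, P x = 1)
    (z : ℝ) (hz : 0 ≤ z)
    (Q : 𝒳 → ℝ) (hQ : ∀ x, 0 ≤ Q x) (hQsum : ∑ x, Q x = 1)
    (Pstar : 𝒳 → ℝ)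
    (hPstar : Pstar = fun x => ((1 + z ^ 2 / 2) * P x + z * Real.sqrt (Q x * P x)) /
        ∑ x', ((1 + z ^ 2 / 2) * P x' + z * Real.sqrt (Q x' * P x'))) :
    ∑ x, P x * Real.logb 2 (P x / Pstar x) ≤ Real.logb 2 (1 + 1 / Real.sqrt 2) := by
  have hs2 : (0:ℝ) < Real.sqrt 2 := by positivity
  have hs2sq : Real.sqrt 2 ^ 2 = 2 := Real.sq_sqrt (by norm_num)
  have hc : (0:ℝ) < 1 + 1 / Real.sqrt 2 := by positivity
  set g : 𝒳 → ℝ := fun x => (1 + z ^ 2 / 2) * P x + z * Real.sqrt (Q x * P x) with hg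
  have hgpos : ∀ x, 0 < g x := by
    intro x
    have := hP x
    have h1 : 0 ≤ z * Real.sqrt (Q x * P x) := by positivity
    have h2 : 0 < (1 + z ^ 2 / 2) * P x := by positivity
    simp only [hg]; linarith
  set S := ∑ x', g x' with hS
  have hSpos : 0 < S := Finset.sum_pos (fun x _ => hgpos x) univ_nonempty
  -- Cauchy-Schwarz
  have hCS : ∑ x, Real.sqrt (Q x * P x) ≤ 1 := by
    have h1 : ∀ x, Real.sqrt (Q x * P x) = Real.sqrt (Q x) * Real.sqrt (P x) :=
      fun x => Real.sqrt_mul (hQ x) _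
    calc ∑ x, Real.sqrt (Q x * P x) = ∑ x, Real.sqrt (Q x) * Real.sqrt (P x) := by
          simp only [h1]
      _ ≤ Real.sqrt (∑ x, Q x) * Real.sqrt (∑ x, P x) :=
          Real.sum_sqrt_mul_sqrt_le _ hQ (fun x => (hP x).le)
      _ = 1 := by rw [hQsum, hPsum]; simp
  -- z ≤ (1 + z²/2)/√2
  have hzb : z * Real.sqrt 2 ≤ 1 + z ^ 2 / 2 := by
    nlinarith [sq_nonneg (z - Real.sqrt 2)]
  -- S bound
  have hSb : S ≤ (1 + 1 / Real.sqrt 2) * (1 + z ^ 2 / 2) := by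
    have h1 : S = (1 + z ^ 2 / 2) * (∑ x, P x) + z * (∑ x, Real.sqrt (Q x * P x)) := by
      simp only [hS, hg, Finset.mul_sum, Finset.sum_add_distrib]
    have h2 : S ≤ (1 + z ^ 2 / 2) + z := by
      rw [h1, hPsum, mul_one]
      have : z * (∑ x, Real.sqrt (Q x * P x)) ≤ z * 1 :=
        mul_le_mul_of_nonneg_left hCS hz
      linarith
    have h3 : z ≤ (1 + z ^ 2 / 2) / Real.sqrt 2 := by
      rw [le_div_iff₀ hs2]; exact hzb
    have h4 : (1 + 1 / Real.sqrt 2) * (1 + z ^ 2 / 2)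
        = (1 + z ^ 2 / 2) + (1 + z ^ 2 / 2) / Real.sqrt 2 := by ring
    linarith
  -- termwise ratio bound
  have hratio : ∀ x, P x / Pstar x ≤ 1 + 1 / Real.sqrt 2 := by
    intro x
    have hgx := hgpos x
    have hPx := hP x
    rw [hPstar]
    simp only
    rw [div_div_eq_mul_div, div_le_iff₀ hgx]
    have hsqrt : 0 ≤ z * Real.sqrt (Q x * P x) := by positivity
    have hgge : (1 + z ^ 2 / 2) * P x ≤ g x := by simp only [hg]; linarith
    calc P x * S ≤ P x * ((1 + 1 / Real.sqrt 2) * (1 + z ^ 2 / 2)) :=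
          mul_le_mul_of_nonneg_left hSb hPx.le
      _ = (1 + 1 / Real.sqrt 2) * ((1 + z ^ 2 / 2) * P x) := by ring
      _ ≤ (1 + 1 / Real.sqrt 2) * g x := mul_le_mul_of_nonneg_left hgge hc.le
  have hterm : ∀ x, P x * Real.logb 2 (P x / Pstar x)
      ≤ P x * Real.logb 2 (1 + 1 / Real.sqrt 2) := by
    intro x
    have hPstarpos : 0 < Pstar x := by
      rw [hPstar]; exact div_pos (hgpos x) hSpos
    exact mul_le_mul_of_nonneg_left
      (Real.logb_le_logb_of_le one_lt_two (div_pos (hP x) hPstarpos) (hratio x)) (hP x).le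
  calc ∑ x, P x * Real.logb 2 (P x / Pstar x)
      ≤ ∑ x, P x * Real.logb 2 (1 + 1 / Real.sqrt 2) :=
        Finset.sum_le_sum (fun x _ => hterm x)
    _ = Real.logb 2 (1 + 1 / Real.sqrt 2) := by
        rw [← Finset.sum_mul, hPsum, one_mul]
end

section
/- Let 𝒳 be a finite set with |𝒳| ≥ 2, and P a pmf on 𝒳 with P(x) > 0 for all x and entropy H(P) > 0 (in bits). Let ℓ : 𝒳 → ℝ≥0 satisfy Kraft's inequality Σ_x 2^{−ℓ(x)} ≤ 1 and E[ℓ(X)] ≤ log₂|𝒳| (with X ∼ P). Then √(E[ℓ(X)²]) / E[ℓ(X)] ≤ (log₂|𝒳| / H(P)) · (min_{x∈𝒳} P(x))^{−1/2}. -/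
open Real Finset

/-!
By Gibbs' inequality, Kraft's inequality forces `H(P) ≤ E[ℓ]`, so the prefactor
`log₂|𝒳| / H(P)` is at least `1` and it suffices to show `√(E[ℓ²]) / E[ℓ] ≤ p_min^{-1/2}`.
That follows from `p_min ℓ(x) ≤ P(x) ℓ(x) ≤ E[ℓ]`, which gives `E[ℓ²] ≤ E[ℓ] · E[ℓ] / p_min`.
-/

lemma mul_log_div_le_sub {p q : ℝ} (hp : 0 ≤ p) (hq : 0 < q) : p * log (q / p) ≤ q - p := by
  rcases hp.eq_or_lt with rfl | hp
  · simpa using hq.le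
  calc p * log (q / p) ≤ p * (q / p - 1) :=
        mul_le_mul_of_nonneg_left (log_le_sub_one_of_pos (div_pos hq hp)) hp.le
    _ = q - p := by field_simp

lemma sum_mul_log_div_nonpos {ι : Type*} [Fintype ι] {p q : ι → ℝ} (hp : ∀ i, 0 ≤ p i)
    (hq : ∀ i, 0 < q i) (hpq : ∑ i, q i ≤ ∑ i, p i) : ∑ i, p i * log (q i / p i) ≤ 0 :=
  calc ∑ i, p i * log (q i / p i) ≤ ∑ i, (q i - p i) :=
        sum_le_sum fun i _ ↦ mul_log_div_le_sub (hp i) (hq i)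
    _ ≤ 0 := by rw [sum_sub_distrib]; linarith

lemma mul_logb_inv_sub_mul_eq {p t : ℝ} (hp : 0 ≤ p) :
    p * logb 2 (1 / p) - p * t = p * log ((2 : ℝ) ^ (-t) / p) / log 2 := by
  rcases hp.eq_or_lt with rfl | hp
  · simp
  rw [log_div (rpow_pos_of_pos two_pos _).ne' hp.ne', log_rpow two_pos, logb, one_div, log_inv]
  field_simp
  ring

theorem entropy_le_sum_mul_of_kraft {ι : Type*} [Fintype ι] {P ℓ : ι → ℝ}
    (hP : ∀ x, 0 ≤ P x) (hPsum : ∑ x, P x = 1) (hKraft : ∑ x, (2 : ℝ) ^ (-ℓ x) ≤ 1) :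
    ∑ x, P x * logb 2 (1 / P x) ≤ ∑ x, P x * ℓ x := by
  have gibbs : ∑ x, P x * log ((2 : ℝ) ^ (-ℓ x) / P x) ≤ 0 :=
    sum_mul_log_div_nonpos hP (fun x ↦ rpow_pos_of_pos two_pos _) (hPsum ▸ hKraft)
  rw [← sub_nonpos, ← sum_sub_distrib]
  simp_rw [mul_logb_inv_sub_mul_eq (hP _), ← sum_div]
  exact div_nonpos_of_nonpos_of_nonneg gibbs (log_nonneg one_le_two)

section MinWeight

variable {ι : Type*} [Fintype ι] {P ℓ : ι → ℝ} {m : ℝ}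

lemma sum_mul_sq_le_sq_sum_mul_div (hm : 0 < m) (hmP : ∀ x, m ≤ P x) (hℓ : ∀ x, 0 ≤ ℓ x) :
    ∑ x, P x * ℓ x ^ 2 ≤ (∑ x, P x * ℓ x) ^ 2 / m := by
  set E := ∑ x, P x * ℓ x
  have hPℓ : ∀ x, 0 ≤ P x * ℓ x := fun x ↦ mul_nonneg (hm.le.trans (hmP x)) (hℓ x)
  have hℓE : ∀ x, ℓ x ≤ E / m := fun x ↦ by
    rw [le_div_iff₀ hm]
    calc ℓ x * m ≤ P x * ℓ x := by nlinarith [hmP x, hℓ x]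
      _ ≤ E := single_le_sum (fun y _ ↦ hPℓ y) (mem_univ x)
  calc ∑ x, P x * ℓ x ^ 2 = ∑ x, P x * ℓ x * ℓ x := by simp_rw [sq, mul_assoc]
    _ ≤ ∑ x, P x * ℓ x * (E / m) :=
        sum_le_sum fun x _ ↦ mul_le_mul_of_nonneg_left (hℓE x) (hPℓ x)
    _ = E ^ 2 / m := by rw [← sum_mul]; ring

lemma sqrt_sum_mul_sq_div_sum_mul_le (hm : 0 < m) (hmP : ∀ x, m ≤ P x) (hℓ : ∀ x, 0 ≤ ℓ x) :
    √(∑ x, P x * ℓ x ^ 2) / ∑ x, P x * ℓ x ≤ 1 / √m := by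
  set E := ∑ x, P x * ℓ x
  have hE : 0 ≤ E := sum_nonneg fun x _ ↦ mul_nonneg (hm.le.trans (hmP x)) (hℓ x)
  rcases hE.eq_or_lt with hE0 | hEpos
  · rw [← hE0, div_zero]; positivity
  calc √(∑ x, P x * ℓ x ^ 2) / E ≤ √(E ^ 2 / m) / E := by
        gcongr; exact sum_mul_sq_le_sq_sum_mul_div hm hmP hℓ
    _ = 1 / √m := by
        rw [sqrt_div (sq_nonneg E), sqrt_sq hE]
        field_simp

end MinWeight

theorem stmt_18_general {𝒳 : Type*} [Fintype 𝒳] [Nonempty 𝒳]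
    (P : 𝒳 → ℝ) (hP : ∀ x, 0 < P x) (hPsum : ∑ x, P x = 1)
    (hH : 0 < ∑ x, P x * Real.logb 2 (1 / P x))
    (ℓ : 𝒳 → ℝ) (hℓ : ∀ x, 0 ≤ ℓ x) (hKraft : ∑ x, (2 : ℝ) ^ (-ℓ x) ≤ 1)
    (hEL : ∑ x, P x * ℓ x ≤ Real.logb 2 (Fintype.card 𝒳)) :
    Real.sqrt (∑ x, P x * ℓ x ^ 2) / (∑ x, P x * ℓ x) ≤
      (Real.logb 2 (Fintype.card 𝒳) / (∑ x, P x * Real.logb 2 (1 / P x))) *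
        (1 / Real.sqrt (Finset.univ.inf' Finset.univ_nonempty P)) := by
  have hmin : 0 < univ.inf' univ_nonempty P := (lt_inf'_iff _).2 fun x _ ↦ hP x
  have hentropy := entropy_le_sum_mul_of_kraft (fun x ↦ (hP x).le) hPsum hKraft
  have hprefactor : 1 ≤ logb 2 (Fintype.card 𝒳) / ∑ x, P x * logb 2 (1 / P x) :=
    (one_le_div hH).2 (hentropy.trans hEL)
  calc √(∑ x, P x * ℓ x ^ 2) / ∑ x, P x * ℓ x ≤ 1 / √(univ.inf' univ_nonempty P) :=
        sqrt_sum_mul_sq_div_sum_mul_le hmin (fun x ↦ inf'_le _ (mem_univ x)) hℓ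
    _ ≤ _ := le_mul_of_one_le_left (by positivity) hprefactor

/-- Uniform bound on the maximizer `z*(ℓ) = √(E[ℓ(X)²])/E[ℓ(X)]`: for any length
function `ℓ ≥ 0` satisfying Kraft's inequality with `E[ℓ(X)] ≤ log₂|𝒳|`,
`√(E[ℓ(X)²])/E[ℓ(X)] ≤ (log₂|𝒳|/H(P))·(min_x P(x))^{−1/2}`. -/
theorem stmt_18 {𝒳 : Type*} [Fintype 𝒳] [Nonempty 𝒳] (hcard : 2 ≤ Fintype.card 𝒳)
    (P : 𝒳 → ℝ) (hP : ∀ x, 0 < P x) (hPsum : ∑ x, P x = 1)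
    (hH : 0 < ∑ x, P x * Real.logb 2 (1 / P x))
    (ℓ : 𝒳 → ℝ) (hℓ : ∀ x, 0 ≤ ℓ x) (hKraft : ∑ x, (2 : ℝ) ^ (-ℓ x) ≤ 1)
    (hEL : ∑ x, P x * ℓ x ≤ Real.logb 2 (Fintype.card 𝒳)) :
    Real.sqrt (∑ x, P x * ℓ x ^ 2) / (∑ x, P x * ℓ x) ≤
      (Real.logb 2 (Fintype.card 𝒳) / (∑ x, P x * Real.logb 2 (1 / P x))) *
        (1 / Real.sqrt (Finset.univ.inf' Finset.univ_nonempty P)) :=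
  stmt_18_general P hP hPsum hH ℓ hℓ hKraft hEL
end
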